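/- arXiv:2205.04553 — 13 statements merged into one kernel-verified Lean document; each statement's English description precedes it below -/
import Mathlib

section
/- Let d ≥ 2 and define d + 1 points of ℝ^d by: x_k = e_k − e_d for k = 1, …, d − 2 (where e_j is the j-th standard basis vector), x_{d−1} = (−1, …, −1, 1, −1) (entries −1 in coordinates 1, …, d − 2, entry 1 in coordinate d − 1, entry −1 in coordinate d), x_d = (−1, …, −1), and x_{d+1} = e_d. Then 0 ∈ conv{x_1, …, x_{d+1}} (indeed 0 = Σ α_i x_i with α_1 = … = α_{d−2} = 1/(2(d−1)), α_{d−1} = α_d = 1/(4(d−1)), α_{d+1} = 1/2), while for every subset K ⊆ {1, …, d+1} with |K| ≤ d one has dist(0, conv{x_i : i ∈ K}) > 0, i.e. 0 ∉ conv{x_i : i ∈ K}. -/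
/-- The `d + 1` points from the proof of Lemma 2 (0-indexed): for `k < d - 2`,
`x_k = e_k − e_{d-1}`; `x_{d-2}` has entry `1` in coordinate `d - 2` and `-1`
elsewhere; `x_{d-1} = (−1, …, −1)`; `x_d = e_{d-1}`. -/
noncomputable def lemmaPts (d : ℕ) : Fin (d + 1) → EuclideanSpace ℝ (Fin d) := fun k =>
  (EuclideanSpace.equiv (Fin d) ℝ).symm (fun j =>
    if (k : ℕ) < d - 2 then
      (if (j : ℕ) = (k : ℕ) then (1 : ℝ) else if (j : ℕ) = d - 1 then -1 else 0)
    else if (k : ℕ) = d - 2 then (if (j : ℕ) = d - 2 then 1 else -1)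
    else if (k : ℕ) = d - 1 then -1
    else if (j : ℕ) = d - 1 then 1 else 0)


def ptf (d k j : ℕ) : ℝ :=
  if k < d - 2 then (if j = k then 1 else if j = d - 1 then -1 else 0)
  else if k = d - 2 then (if j = d - 2 then 1 else -1)
  else if k = d - 1 then -1
  else if j = d - 1 then 1 else 0

noncomputable def vf (d m j : ℕ) : ℝ :=
  if m = d then (if j = d - 1 then -1 else 0)
  else 2 + (if j = m ∧ m < d - 2 then 2 - 2*(d:ℝ) else 0)
        + (if j = d - 2 then (if m < d - 2 then -2 else if m = d - 2 then -(2*(d:ℝ)) else 2*(d:ℝ) - 4) else 0)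
        + (if j = d - 1 then -1 else 0)

lemma dotA (d j : ℕ) (hd : 2 ≤ d) (hj : j < d - 2) (g : ℕ → ℝ) :
    ∑ i ∈ Finset.range d, g i * ptf d j i = g j - g (d-1) := by
  have h1 : ∀ i, g i * ptf d j i
      = (if i = j then g i else 0) + (if i = d - 1 then -g i else 0) := by
    intro i
    simp only [ptf, if_pos hj]
    have h6 : ¬ j = d - 1 := by omega
    by_cases h2 : i = d - 1
    · have h3 : ¬ d - 1 = j := by omega
      simp [h2, h3]
    · by_cases h1 : i = j <;> simp [h1, h2, h6]
  rw [Finset.sum_congr rfl (fun i _ => h1 i), Finset.sum_add_distrib,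
    Finset.sum_ite_eq', Finset.sum_ite_eq']
  have e1 : j ∈ Finset.range d := by simp; omega
  have e2 : d - 1 ∈ Finset.range d := by simp; omega
  rw [if_pos e1, if_pos e2]
  ring

lemma dotB (d : ℕ) (hd : 2 ≤ d) (g : ℕ → ℝ) :
    ∑ i ∈ Finset.range d, g i * ptf d (d-2) i
      = 2 * g (d-2) - ∑ i ∈ Finset.range d, g i := by
  have h1 : ∀ i, g i * ptf d (d-2) i
      = (if i = d - 2 then 2 * g i else 0) + (- g i) := by
    intro i
    simp only [ptf]
    have h0 : ¬ (d - 2 < d - 2) := by omega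
    by_cases h2 : i = d - 2 <;> simp [h0, h2] <;> ring
  rw [Finset.sum_congr rfl (fun i _ => h1 i), Finset.sum_add_distrib,
    Finset.sum_ite_eq']
  have e1 : d - 2 ∈ Finset.range d := by simp; omega
  rw [if_pos e1, Finset.sum_neg_distrib]
  ring

lemma dotC (d : ℕ) (hd : 2 ≤ d) (g : ℕ → ℝ) :
    ∑ i ∈ Finset.range d, g i * ptf d (d-1) i = - ∑ i ∈ Finset.range d, g i := by
  have h1 : ∀ i, g i * ptf d (d-1) i = - g i := by
    intro i
    have h2 : ¬ (d - 1 < d - 2) := by omega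
    have h3 : ¬ (d - 1 = d - 2) := by omega
    simp [ptf, h2, h3]
  rw [Finset.sum_congr rfl (fun i _ => h1 i), Finset.sum_neg_distrib]

lemma dotD (d : ℕ) (hd : 2 ≤ d) (g : ℕ → ℝ) :
    ∑ i ∈ Finset.range d, g i * ptf d d i = g (d-1) := by
  have h1 : ∀ i, g i * ptf d d i = (if i = d - 1 then g i else 0) := by
    intro i
    have h2 : ¬ (d < d - 2) := by omega
    have h3 : ¬ (d = d - 2) := by omega
    have h4 : ¬ (d = d - 1) := by omega
    by_cases h5 : i = d - 1 <;> simp [ptf, h2, h3, h4, h5]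
  rw [Finset.sum_congr rfl (fun i _ => h1 i), Finset.sum_ite_eq']
  have e1 : d - 1 ∈ Finset.range d := by simp; omega
  rw [if_pos e1]

lemma sumvf (d m : ℕ) (hd : 2 ≤ d) (hm : m ≤ d) :
    ∑ i ∈ Finset.range d, vf d m i = if m = d - 1 then 4*(d:ℝ) - 5 else -1 := by
  have e2 : d - 2 ∈ Finset.range d := by simp; omega
  have e1 : d - 1 ∈ Finset.range d := by simp; omega
  rcases (by omega : m < d - 2 ∨ m = d - 2 ∨ m = d - 1 ∨ m = d) with h | h | h | h
  · have hmd : ¬ m = d := by omega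
    have hmd1 : ¬ m = d - 1 := by omega
    have em : m ∈ Finset.range d := by simp; omega
    have h1 : ∀ i, vf d m i = 2 + ((if i = m then 2 - 2*(d:ℝ) else 0)
        + ((if i = d - 2 then -2 else 0) + (if i = d - 1 then -1 else 0))) := by
      intro i
      simp only [vf, if_neg hmd, h, and_true, if_pos h, if_true]
      ring
    rw [Finset.sum_congr rfl (fun i _ => h1 i), Finset.sum_add_distrib,
      Finset.sum_add_distrib, Finset.sum_add_distrib,
      Finset.sum_ite_eq', Finset.sum_ite_eq', Finset.sum_ite_eq',
      if_pos em, if_pos e1, if_pos e2, Finset.sum_const, Finset.card_range,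
      if_neg hmd1]
    push_cast
    ring
  · have hmd : ¬ m = d := by omega
    have hmd1 : ¬ m = d - 1 := by omega
    have hlt : ¬ m < d - 2 := by omega
    have h1 : ∀ i, vf d m i = 2 + ((if i = d - 2 then -(2*(d:ℝ)) else 0)
        + (if i = d - 1 then -1 else 0)) := by
      intro i
      simp only [vf, if_neg hmd, hlt, and_false, ite_false, if_neg hlt, if_pos h]
      ring
    rw [Finset.sum_congr rfl (fun i _ => h1 i), Finset.sum_add_distrib,
      Finset.sum_add_distrib, Finset.sum_ite_eq', Finset.sum_ite_eq',
      if_pos e1, if_pos e2, Finset.sum_const, Finset.card_range, if_neg hmd1]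
    push_cast
    ring
  · have hmd : ¬ m = d := by omega
    have hlt : ¬ m < d - 2 := by omega
    have hne : ¬ m = d - 2 := by omega
    have h1 : ∀ i, vf d m i = 2 + ((if i = d - 2 then 2*(d:ℝ) - 4 else 0)
        + (if i = d - 1 then -1 else 0)) := by
      intro i
      simp only [vf, if_neg hmd, hlt, and_false, ite_false, if_neg hlt, if_neg hne]
      ring
    rw [Finset.sum_congr rfl (fun i _ => h1 i), Finset.sum_add_distrib,
      Finset.sum_add_distrib, Finset.sum_ite_eq', Finset.sum_ite_eq',
      if_pos e1, if_pos e2, Finset.sum_const, Finset.card_range, if_pos h]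
    push_cast
    ring
  · have hne : ¬ m = d - 1 := by omega
    have h1 : ∀ i, vf d m i = (if i = d - 1 then (-1 : ℝ) else 0) := by
      intro i; simp only [vf, if_pos h]
    rw [Finset.sum_congr rfl (fun i _ => h1 i), Finset.sum_ite_eq',
      if_pos e1, if_neg hne]

lemma dot_eq_one (d m j : ℕ) (hd : 2 ≤ d) (hm : m ≤ d) (hj : j ≤ d) (hne : j ≠ m) :
    ∑ i ∈ Finset.range d, vf d m i * ptf d j i = 1 := by
  have hS := sumvf d m hd hm
  rcases (by omega : j < d - 2 ∨ j = d - 2 ∨ j = d - 1 ∨ j = d) with hc | hc | hc | hc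
  · rw [dotA d j hd hc]
    by_cases hm' : m = d
    · have h3 : ¬ j = d - 1 := by omega
      have h5 : d - 1 = d - 1 := rfl
      simp [vf, hm', h3, h5]
    · have h1 : ¬ (j = m ∧ m < d - 2) := by
        rintro ⟨rfl, _⟩; exact hne rfl
      have h2 : ¬ j = d - 2 := by omega
      have h3 : ¬ j = d - 1 := by omega
      have h4 : ¬ (d - 1 = m ∧ m < d - 2) := by omega
      have h5 : ¬ d - 1 = d - 2 := by omega
      simp [vf, hm', h1, h2, h3, h4, h5]
  · subst hc
    rw [dotB d hd, hS]
    have hne2 : ¬ m = d - 2 := fun h => hne h.symm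
    by_cases hm1 : m = d - 1
    · have hm' : ¬ m = d := by omega
      have h4 : ¬ (d - 2 = m ∧ m < d - 2) := by omega
      have hlt : ¬ m < d - 2 := by omega
      rw [if_pos hm1]
      simp [vf, hm', h4, hlt, hne2, hm1, show ¬ d - 2 = d - 1 by omega,
        show ¬ d - 1 = d by omega, show ¬ d - 1 < d - 2 by omega,
        show ¬ d - 1 = d - 2 by omega]
      ring
    · rw [if_neg hm1]
      by_cases hm' : m = d
      · simp [vf, hm', show ¬ d - 2 = d - 1 by omega]
      · have hlt : m < d - 2 := by omega
        have h4 : ¬ (d - 2 = m ∧ m < d - 2) := by omega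
        simp [vf, hm', h4, hlt, show ¬ d - 2 = m by omega,
          show ¬ d - 2 = d - 1 by omega]
  · subst hc
    have hm1 : ¬ m = d - 1 := fun h => hne h.symm
    rw [dotC d hd, hS, if_neg hm1]
    norm_num
  · rw [hc]
    have hm' : ¬ m = d := fun h => hne (hc.trans h.symm)
    have h4 : ¬ (d - 1 = m ∧ m < d - 2) := by omega
    have h5 : ¬ d - 1 = d - 2 := by omega
    simp [dotD d hd, vf, hm', h4, h5]
    norm_num

noncomputable def wf (d k : ℕ) : ℝ :=
  1/(2*((d:ℝ)-1)) + (if k = d - 2 then -(1/(4*((d:ℝ)-1))) else 0)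
    + (if k = d - 1 then -(1/(4*((d:ℝ)-1))) else 0)
    + (if k = d then 1/2 - 1/(2*((d:ℝ)-1)) else 0)

lemma dcast (d : ℕ) (hd : 2 ≤ d) : (1:ℝ) ≤ (d:ℝ) - 1 := by
  have : (2:ℝ) ≤ (d:ℝ) := by exact_mod_cast hd
  linarith

lemma wf_nonneg (d k : ℕ) (hd : 2 ≤ d) (hk : k ≤ d) : 0 ≤ wf d k := by
  have h1 := dcast d hd
  have h2 : (0:ℝ) < (d:ℝ) - 1 := by linarith
  have key : (1:ℝ)/(2*((d:ℝ)-1)) + -(1/(4*((d:ℝ)-1))) = 1/(4*((d:ℝ)-1)) := by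
    field_simp
    ring
  unfold wf
  rcases (by omega : (k ≠ d - 2 ∧ k ≠ d - 1 ∧ k ≠ d) ∨ k = d - 2 ∨ k = d - 1 ∨ k = d)
    with ⟨a, b, c⟩ | h | h | h
  · rw [if_neg a, if_neg b, if_neg c]
    simp only [add_zero]
    positivity
  · rw [if_pos h, if_neg (by omega : ¬ k = d - 1), if_neg (by omega : ¬ k = d)]
    simp only [add_zero]
    rw [key]
    positivity
  · rw [if_neg (by omega : ¬ k = d - 2), if_pos h, if_neg (by omega : ¬ k = d)]
    simp only [add_zero]
    rw [key]
    positivity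
  · rw [if_neg (by omega : ¬ k = d - 2), if_neg (by omega : ¬ k = d - 1), if_pos h]
    simp only [add_zero]
    linarith

lemma sumwf (d : ℕ) (hd : 2 ≤ d) : ∑ k ∈ Finset.range (d+1), wf d k = 1 := by
  have h1 := dcast d hd
  have h2 : ((d:ℝ) - 1) ≠ 0 := by linarith
  have e2 : d - 2 ∈ Finset.range (d+1) := by simp
  have e1 : d - 1 ∈ Finset.range (d+1) := by simp
  have e0 : d ∈ Finset.range (d+1) := by simp
  unfold wf
  rw [Finset.sum_add_distrib, Finset.sum_add_distrib, Finset.sum_add_distrib,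
    Finset.sum_ite_eq', Finset.sum_ite_eq', Finset.sum_ite_eq',
    if_pos e2, if_pos e1, if_pos e0, Finset.sum_const, Finset.card_range]
  have hcast : ((d+1 : ℕ) : ℝ) = (d:ℝ) + 1 := by push_cast; ring
  rw [nsmul_eq_mul, hcast]
  field_simp
  ring

lemma combo (d : ℕ) (hd : 2 ≤ d) (j : ℕ) (hj : j < d) :
    ∑ k ∈ Finset.range (d+1), wf d k * ptf d k j = 0 := by
  have h1 := dcast d hd
  have h2 : ((d:ℝ) - 1) ≠ 0 := by linarith
  have e2 : d - 2 ∈ Finset.range (d+1) := by simp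
  have e1 : d - 1 ∈ Finset.range (d+1) := by simp
  have e0 : d ∈ Finset.range (d+1) := by simp
  have wval2 : wf d (d-2) = 1/(4*((d:ℝ)-1)) := by
    unfold wf
    rw [if_pos rfl, if_neg (by omega : ¬ d - 2 = d - 1), if_neg (by omega : ¬ d - 2 = d)]
    field_simp
    ring
  have wval1 : wf d (d-1) = 1/(4*((d:ℝ)-1)) := by
    unfold wf
    rw [if_neg (by omega : ¬ d - 1 = d - 2), if_pos rfl, if_neg (by omega : ¬ d - 1 = d)]
    field_simp
    ring
  rcases (by omega : j < d - 2 ∨ j = d - 2 ∨ j = d - 1) with hc | hc | hc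
  · have hpt : ∀ k, wf d k * ptf d k j
        = (if k = j then 1/(2*((d:ℝ)-1)) else 0)
          + ((if k = d - 2 then -(1/(4*((d:ℝ)-1))) else 0)
          + (if k = d - 1 then -(1/(4*((d:ℝ)-1))) else 0)) := by
      intro k
      rcases (by omega : (k < d - 2 ∧ k = j) ∨ (k < d - 2 ∧ k ≠ j) ∨ k = d - 2 ∨ k = d - 1
          ∨ ¬ (k < d - 2) ∧ k ≠ d - 2 ∧ k ≠ d - 1)
        with ⟨hk, he⟩ | ⟨hk, hkj⟩ | he | he | ⟨hk, hk2, hk1⟩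
      · rw [he]
        rw [show ptf d j j = 1 by
          unfold ptf; rw [if_pos (by omega : j < d - 2), if_pos rfl]]
        rw [show wf d j = 1/(2*((d:ℝ)-1)) by
          unfold wf
          rw [if_neg (by omega : ¬ j = d - 2), if_neg (by omega : ¬ j = d - 1),
            if_neg (by omega : ¬ j = d)]
          ring]
        rw [if_pos rfl, if_neg (by omega : ¬ j = d - 2), if_neg (by omega : ¬ j = d - 1)]
        ring
      · rw [show ptf d k j = 0 by
          unfold ptf
          rw [if_pos hk, if_neg (by omega : ¬ j = k), if_neg (by omega : ¬ j = d - 1)]]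
        rw [if_neg (by omega : ¬ k = j), if_neg (by omega : ¬ k = d - 2),
          if_neg (by omega : ¬ k = d - 1)]
        ring
      · rw [he]
        rw [show ptf d (d-2) j = -1 by
          unfold ptf
          rw [if_neg (by omega : ¬ d - 2 < d - 2), if_pos rfl,
            if_neg (by omega : ¬ j = d - 2)]]
        rw [wval2, if_neg (by omega : ¬ d - 2 = j), if_pos rfl,
          if_neg (by omega : ¬ d - 2 = d - 1)]
        ring
      · rw [he]
        rw [show ptf d (d-1) j = -1 by
          unfold ptf
          rw [if_neg (by omega : ¬ d - 1 < d - 2), if_neg (by omega : ¬ d - 1 = d - 2),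
            if_pos rfl]]
        rw [wval1, if_neg (by omega : ¬ d - 1 = j), if_neg (by omega : ¬ d - 1 = d - 2),
          if_pos rfl]
        ring
      · rw [show ptf d k j = 0 by
          unfold ptf
          rw [if_neg (by omega : ¬ k < d - 2), if_neg hk2, if_neg hk1,
            if_neg (by omega : ¬ j = d - 1)]]
        rw [if_neg (by omega : ¬ k = j), if_neg hk2, if_neg hk1]
        ring
    rw [Finset.sum_congr rfl (fun k _ => hpt k), Finset.sum_add_distrib,
      Finset.sum_add_distrib, Finset.sum_ite_eq', Finset.sum_ite_eq', Finset.sum_ite_eq',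
      if_pos (by simp; omega : j ∈ Finset.range (d+1)), if_pos e2, if_pos e1]
    field_simp
    ring
  · have hpt : ∀ k, wf d k * ptf d k j
        = (if k = d - 2 then 1/(4*((d:ℝ)-1)) else 0)
          + (if k = d - 1 then -(1/(4*((d:ℝ)-1))) else 0) := by
      intro k
      rcases (by omega : (k < d - 2) ∨ k = d - 2 ∨ k = d - 1
          ∨ ¬ (k < d - 2) ∧ k ≠ d - 2 ∧ k ≠ d - 1) with hk | he | he | ⟨hk, hk2, hk1⟩
      · rw [show ptf d k j = 0 by
          unfold ptf
          rw [if_pos hk, if_neg (by omega : ¬ j = k), if_neg (by omega : ¬ j = d - 1)]]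
        rw [if_neg (by omega : ¬ k = d - 2), if_neg (by omega : ¬ k = d - 1)]
        ring
      · rw [he]
        rw [show ptf d (d-2) j = 1 by
          unfold ptf
          rw [if_neg (by omega : ¬ d - 2 < d - 2), if_pos rfl, if_pos (by omega : j = d - 2)]]
        rw [wval2, if_pos rfl, if_neg (by omega : ¬ d - 2 = d - 1)]
        ring
      · rw [he]
        rw [show ptf d (d-1) j = -1 by
          unfold ptf
          rw [if_neg (by omega : ¬ d - 1 < d - 2), if_neg (by omega : ¬ d - 1 = d - 2),
            if_pos rfl]]
        rw [wval1, if_neg (by omega : ¬ d - 1 = d - 2), if_pos rfl]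
        ring
      · rw [show ptf d k j = 0 by
          unfold ptf
          rw [if_neg (by omega : ¬ k < d - 2), if_neg hk2, if_neg hk1,
            if_neg (by omega : ¬ j = d - 1)]]
        rw [if_neg hk2, if_neg hk1]
        ring
    rw [Finset.sum_congr rfl (fun k _ => hpt k), Finset.sum_add_distrib,
      Finset.sum_ite_eq', Finset.sum_ite_eq', if_pos e2, if_pos e1]
    ring
  · have hpt : ∀ k ∈ Finset.range (d+1), wf d k * ptf d k j
        = - wf d k + (if k = d then 1 else 0) := by
      intro k hkmem
      have hkd : k ≤ d := by simp at hkmem; omega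
      rcases (by omega : (k < d - 2) ∨ k = d - 2 ∨ k = d - 1 ∨ k = d)
        with hk | he | he | he
      · rw [show ptf d k j = -1 by
          unfold ptf
          rw [if_pos hk, if_neg (by omega : ¬ j = k), if_pos (by omega : j = d - 1)]]
        rw [if_neg (by omega : ¬ k = d)]
        ring
      · rw [he]
        rw [show ptf d (d-2) j = -1 by
          unfold ptf
          rw [if_neg (by omega : ¬ d - 2 < d - 2), if_pos rfl,
            if_neg (by omega : ¬ j = d - 2)]]
        rw [if_neg (by omega : ¬ d - 2 = d)]
        ring
      · rw [he]
        rw [show ptf d (d-1) j = -1 by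
          unfold ptf
          rw [if_neg (by omega : ¬ d - 1 < d - 2), if_neg (by omega : ¬ d - 1 = d - 2),
            if_pos rfl]]
        rw [if_neg (by omega : ¬ d - 1 = d)]
        ring
      · rw [he]
        rw [show ptf d d j = 1 by
          unfold ptf
          rw [if_neg (by omega : ¬ d < d - 2), if_neg (by omega : ¬ d = d - 2),
            if_neg (by omega : ¬ d = d - 1), if_pos (by omega : j = d - 1)]]
        rw [if_pos rfl, show wf d d = 1/2 by
          unfold wf
          rw [if_neg (by omega : ¬ d = d - 2), if_neg (by omega : ¬ d = d - 1), if_pos rfl]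
          ring]
        ring
    rw [Finset.sum_congr rfl hpt, Finset.sum_add_distrib, Finset.sum_neg_distrib,
      sumwf d hd, Finset.sum_ite_eq', if_pos e0]
    ring

lemma lemmaPts_apply (d : ℕ) (k : Fin (d+1)) (j : Fin d) :
    lemmaPts d k j = ptf d (k : ℕ) (j : ℕ) := rfl


/-- For `d ≥ 2`, the origin belongs to the convex hull of the `d + 1` points
`lemmaPts d`, but it does not belong to the convex hull of any subfamily of at
most `d` of these points. -/
theorem zero_mem_hull_but_not_in_small_subhulls (d : ℕ) (hd : 2 ≤ d) :
    (0 : EuclideanSpace ℝ (Fin d)) ∈ convexHull ℝ (Set.range (lemmaPts d)) ∧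
      ∀ K : Finset (Fin (d + 1)), K.card ≤ d →
        (0 : EuclideanSpace ℝ (Fin d)) ∉ convexHull ℝ (lemmaPts d '' ↑K) := by
  constructor
  · have hw : ∑ k : Fin (d+1), wf d (k : ℕ) = 1 := by
      rw [Fin.sum_univ_eq_sum_range (fun k => wf d k) (d+1)]
      exact sumwf d hd
    have hz : Finset.univ.centerMass (fun k : Fin (d+1) => wf d (k : ℕ)) (lemmaPts d)
        = 0 := by
      rw [Finset.centerMass_eq_of_sum_1 _ _ hw]
      ext j
      have : (∑ k : Fin (d+1), wf d (k : ℕ) • lemmaPts d k) j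
          = ∑ k : Fin (d+1), wf d (k : ℕ) * ptf d (k : ℕ) (j : ℕ) := by
        rw [WithLp.ofLp_sum, Finset.sum_apply]
        exact Finset.sum_congr rfl fun k _ => rfl
      rw [this, Fin.sum_univ_eq_sum_range (fun k => wf d k * ptf d k (j : ℕ)) (d+1),
        combo d hd j j.isLt]
      rfl
    rw [← hz]
    exact Finset.centerMass_mem_convexHull _
      (fun i _ => wf_nonneg d i.1 hd (Nat.lt_succ_iff.mp i.isLt))
      (by rw [hw]; norm_num)
      (fun i _ => Set.mem_range_self i)
  · intro K hK h0
    have hex : ∃ m : Fin (d+1), m ∉ K := by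
      by_contra h
      push_neg at h
      have : K = Finset.univ := Finset.eq_univ_iff_forall.2 h
      rw [this, Finset.card_univ, Fintype.card_fin] at hK
      omega
    obtain ⟨m, hm⟩ := hex
    have hC : Convex ℝ {y : EuclideanSpace ℝ (Fin d) |
        ∑ i : Fin d, vf d (m : ℕ) (i : ℕ) * y i = 1} := by
      intro y hy z hz a b ha hb hab
      simp only [Set.mem_setOf_eq] at *
      have hev : ∀ i : Fin d, (a • y + b • z) i = a * y i + b * z i := fun i => rfl
      calc ∑ i : Fin d, vf d (m : ℕ) (i : ℕ) * (a • y + b • z) i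
          = ∑ i : Fin d, (a * (vf d (m : ℕ) (i : ℕ) * y i)
              + b * (vf d (m : ℕ) (i : ℕ) * z i)) := by
            refine Finset.sum_congr rfl fun i _ => ?_
            rw [hev i]; ring
        _ = a * ∑ i : Fin d, vf d (m : ℕ) (i : ℕ) * y i
              + b * ∑ i : Fin d, vf d (m : ℕ) (i : ℕ) * z i := by
            rw [Finset.sum_add_distrib, Finset.mul_sum, Finset.mul_sum]
        _ = 1 := by rw [hy, hz]; linarith
    have hsub : lemmaPts d '' ↑K ⊆ {y : EuclideanSpace ℝ (Fin d) |
        ∑ i : Fin d, vf d (m : ℕ) (i : ℕ) * y i = 1} := by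
      rintro x ⟨k, hkK, rfl⟩
      have hkm : (k : ℕ) ≠ (m : ℕ) := by
        intro h
        exact hm (Fin.val_injective h ▸ hkK)
      show ∑ i : Fin d, vf d (m : ℕ) (i : ℕ) * lemmaPts d k i = 1
      have : (∑ i : Fin d, vf d (m : ℕ) (i : ℕ) * lemmaPts d k i)
          = ∑ i ∈ Finset.range d, vf d (m : ℕ) i * ptf d (k : ℕ) i := by
        rw [← Fin.sum_univ_eq_sum_range (fun i => vf d (m : ℕ) i * ptf d (k : ℕ) i) d]
        exact Finset.sum_congr rfl fun i _ => rfl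
      rw [this]
      exact dot_eq_one d (m : ℕ) (k : ℕ) hd (Nat.lt_succ_iff.mp m.isLt) (Nat.lt_succ_iff.mp k.isLt) hkm
    have h0' := convexHull_min hsub hC h0
    simp only [Set.mem_setOf_eq] at h0'
    have : ∑ i : Fin d, vf d (m : ℕ) (i : ℕ) * (0 : EuclideanSpace ℝ (Fin d)) i = 0 := by
      refine Finset.sum_eq_zero fun i _ => ?_
      simp
    rw [this] at h0'
    exact zero_ne_one h0'
end

section
/- Let d ≥ 2 and define d + 1 points of ℝ^d by: x_k = e_k − e_d for k = 1, …, d − 2 (where e_j is the j-th standard basis vector), x_{d−1} = (−1, …, −1, 1, −1) (entries −1 in coordinates 1, …, d − 2, entry 1 in coordinate d − 1, entry −1 in coordinate d), x_d = (−1, …, −1), and x_{d+1} = e_d. Then any d points from the set {x_1, …, x_{d+1}} are linearly independent; that is, for every subset K ⊆ {1, …, d+1} with |K| = d, the family (x_i)_{i ∈ K} is linearly independent in ℝ^d. -/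
private lemma euclid_sum_apply (d n : ℕ) (G : Fin n → ℝ)
    (x : Fin n → EuclideanSpace ℝ (Fin d)) (j : Fin d) :
    (∑ k : Fin n, G k • x k) j = ∑ k : Fin n, G k * x k j := by
  induction (Finset.univ : Finset (Fin n)) using Finset.induction with
  | empty => simp
  | @insert a s h ih => rw [Finset.sum_insert h, Finset.sum_insert h, ← ih]; rfl

/-- For `d ≥ 2`, any `d` points among the `d + 1` points `lemmaPts d` are
linearly independent. -/
theorem any_d_points_linearIndependent (d : ℕ) (hd : 2 ≤ d) :
    ∀ K : Finset (Fin (d + 1)), K.card = d →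
      LinearIndependent ℝ (fun i : ↥K => lemmaPts d i) := by
  obtain ⟨t, rfl⟩ : ∃ t, d = t + 2 := ⟨d - 2, by omega⟩
  intro K hK
  have hcompl : Kᶜ.card = 1 := by
    rw [Finset.card_compl, hK]; simp
  obtain ⟨m, hm⟩ := Finset.card_eq_one.mp hcompl
  have hmK : m ∉ K := by
    have : m ∈ Kᶜ := by rw [hm]; simp
    exact Finset.mem_compl.mp this
  rw [Fintype.linearIndependent_iff]
  intro g hg
  set G : Fin (t + 2 + 1) → ℝ := fun k => if h : k ∈ K then g ⟨k, h⟩ else 0 with hGdef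
  have hsum : ∑ k : Fin (t + 2 + 1), G k • lemmaPts (t + 2) k = 0 := by
    have h1 : ∑ k : Fin (t + 2 + 1), G k • lemmaPts (t + 2) k
        = ∑ k ∈ K, G k • lemmaPts (t + 2) k := by
      refine (Finset.sum_subset (Finset.subset_univ K) ?_).symm
      intro x _ hx
      simp [hGdef, hx]
    have h2 : ∑ k ∈ K, G k • lemmaPts (t + 2) k
        = ∑ i : ↥K, g i • lemmaPts (t + 2) ↑i := by
      rw [← Finset.sum_coe_sort K (fun k => G k • lemmaPts (t + 2) k)]
      refine Finset.sum_congr rfl ?_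
      intro i _
      simp [hGdef, i.2]
    rw [h1, h2, hg]
  -- ℕ-indexed coefficients
  set G' : ℕ → ℝ := fun k => if h : k < t + 2 + 1 then G ⟨k, h⟩ else 0 with hG'def
  have hGG : ∀ k : Fin (t + 2 + 1), G k = G' (k : ℕ) := by
    intro k; simp [hG'def, k.isLt]
    intro h; have := k.isLt; omega
  have key : ∀ j : ℕ, j < t + 2 →
      ∑ k ∈ Finset.range (t + 2 + 1), G' k *
        (if k < t then (if j = k then (1:ℝ) else if j = t + 1 then -1 else 0)
         else if k = t then (if j = t then 1 else -1)
         else if k = t + 1 then -1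
         else if j = t + 1 then 1 else 0) = 0 := by
    intro j hj
    have h0 : (∑ k : Fin (t + 2 + 1), G k • lemmaPts (t + 2) k) ⟨j, hj⟩ = 0 := by
      rw [hsum]; rfl
    rw [euclid_sum_apply] at h0
    have hconv : ∑ k ∈ Finset.range (t + 2 + 1), G' k *
        (if k < t then (if j = k then (1:ℝ) else if j = t + 1 then -1 else 0)
         else if k = t then (if j = t then 1 else -1)
         else if k = t + 1 then -1
         else if j = t + 1 then 1 else 0)
        = ∑ k : Fin (t + 2 + 1), G k * lemmaPts (t + 2) k ⟨j, hj⟩ := by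
      rw [← Fin.sum_univ_eq_sum_range (fun k => G' k *
          (if k < t then (if j = k then (1:ℝ) else if j = t + 1 then -1 else 0)
           else if k = t then (if j = t then 1 else -1)
           else if k = t + 1 then -1
           else if j = t + 1 then 1 else 0))]
      refine Finset.sum_congr rfl ?_
      intro k _
      rw [hGG k]
      congr 1
    rw [hconv]; exact h0
  -- basic equations
  have eqB : G' t - G' (t + 1) = 0 := by
    have h := key t (by omega)
    rw [Finset.sum_range_succ, Finset.sum_range_succ, Finset.sum_range_succ] at h
    have hz : ∑ k ∈ Finset.range t, G' k *
        (if k < t then (if t = k then (1:ℝ) else if t = t + 1 then -1 else 0)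
         else if k = t then (if t = t then 1 else -1)
         else if k = t + 1 then -1
         else if t = t + 1 then 1 else 0) = 0 := by
      refine Finset.sum_eq_zero ?_
      intro k hk
      rw [Finset.mem_range] at hk
      have h1 : t ≠ k := by omega
      have h2 : t ≠ t + 1 := by omega
      simp [hk, h1, h2]
    rw [hz] at h
    have c1 : ¬ (t < t) := by omega
    have c2 : ¬ (t + 1 < t) := by omega
    have c3 : t + 1 ≠ t := by omega
    have c4 : ¬ (t + 2 < t) := by omega
    have c5 : t + 2 ≠ t := by omega
    have c6 : t + 2 ≠ t + 1 := by omega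
    have c7 : t ≠ t + 1 := by omega
    simp only [c1, c2, c3, c4, c5, c6, c7, if_true, if_false, if_neg, if_pos,
      eq_self_iff_true, ite_true, ite_false] at h
    linarith
  have eqA : ∀ j, j < t → G' j - G' t - G' (t + 1) = 0 := by
    intro j hj
    have h := key j (by omega)
    rw [Finset.sum_range_succ, Finset.sum_range_succ, Finset.sum_range_succ] at h
    have hz : ∑ k ∈ Finset.range t, G' k *
        (if k < t then (if j = k then (1:ℝ) else if j = t + 1 then -1 else 0)
         else if k = t then (if j = t then 1 else -1)
         else if k = t + 1 then -1
         else if j = t + 1 then 1 else 0)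
        = ∑ k ∈ Finset.range t, (if j = k then G' k else 0) := by
      refine Finset.sum_congr rfl ?_
      intro k hk
      rw [Finset.mem_range] at hk
      have h2 : j ≠ t + 1 := by omega
      rcases eq_or_ne j k with h | h <;> simp [hk, h2, h]
    rw [hz, Finset.sum_ite_eq] at h
    have hjm : j ∈ Finset.range t := Finset.mem_range.mpr hj
    rw [if_pos hjm] at h
    have c1 : ¬ (t < t) := by omega
    have c2 : ¬ (t + 1 < t) := by omega
    have c3 : t + 1 ≠ t := by omega
    have c4 : ¬ (t + 2 < t) := by omega
    have c5 : t + 2 ≠ t := by omega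
    have c6 : t + 2 ≠ t + 1 := by omega
    have c7 : j ≠ t := by omega
    have c8 : j ≠ t + 1 := by omega
    simp only [c1, c2, c3, c4, c5, c6, c7, c8, if_true, if_false, if_neg, if_pos,
      eq_self_iff_true, ite_true, ite_false] at h
    linarith
  have eqC : - (∑ k ∈ Finset.range t, G' k) - G' t - G' (t + 1) + G' (t + 2) = 0 := by
    have h := key (t + 1) (by omega)
    rw [Finset.sum_range_succ, Finset.sum_range_succ, Finset.sum_range_succ] at h
    have hz : ∑ k ∈ Finset.range t, G' k *
        (if k < t then (if t + 1 = k then (1:ℝ) else if t + 1 = t + 1 then -1 else 0)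
         else if k = t then (if t + 1 = t then 1 else -1)
         else if k = t + 1 then -1
         else if t + 1 = t + 1 then 1 else 0)
        = ∑ k ∈ Finset.range t, -G' k := by
      refine Finset.sum_congr rfl ?_
      intro k hk
      rw [Finset.mem_range] at hk
      have h1 : t + 1 ≠ k := by omega
      simp [hk, h1]
    rw [hz, Finset.sum_neg_distrib] at h
    have c1 : ¬ (t < t) := by omega
    have c2 : ¬ (t + 1 < t) := by omega
    have c3 : t + 1 ≠ t := by omega
    have c4 : ¬ (t + 2 < t) := by omega
    have c5 : t + 2 ≠ t := by omega
    have c6 : t + 2 ≠ t + 1 := by omega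
    simp only [c1, c2, c3, c4, c5, c6, if_true, if_false, if_neg, if_pos,
      eq_self_iff_true, ite_true, ite_false] at h
    linarith
  -- the missing coefficient vanishes
  have hm0 : G' (m : ℕ) = 0 := by
    rw [← hGG m, hGdef]
    simp [hmK]
  -- G' t = 0 and G' (t+1) = 0
  have ht0 : G' t = 0 ∧ G' (t + 1) = 0 := by
    have hmlt : (m : ℕ) < t + 2 + 1 := m.isLt
    rcases lt_trichotomy (m : ℕ) t with hlt | heq | hgt
    · have := eqA _ hlt
      rw [hm0] at this
      constructor <;> linarith
    · rw [heq] at hm0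
      constructor
      · exact hm0
      · linarith
    · rcases (by omega : (m : ℕ) = t + 1 ∨ (m : ℕ) = t + 2) with h1 | h2
      · rw [h1] at hm0
        constructor
        · linarith
        · exact hm0
      · rw [h2] at hm0
        have hsumv : ∑ k ∈ Finset.range t, G' k = t * (G' t + G' (t + 1)) := by
          rw [Finset.sum_congr rfl (fun k hk => by
            have := eqA k (Finset.mem_range.mp hk)
            linarith : ∀ k ∈ Finset.range t, G' k = G' t + G' (t + 1))]
          rw [Finset.sum_const, Finset.card_range, nsmul_eq_mul]
        rw [hsumv, hm0] at eqC
        have hx : G' t = G' (t + 1) := by linarith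
        rw [← hx] at eqC
        have htnn : (0:ℝ) ≤ (t:ℝ) := Nat.cast_nonneg t
        constructor
        · nlinarith
        · nlinarith
  obtain ⟨ht, ht1⟩ := ht0
  -- all coefficients vanish
  have hall : ∀ k, k < t + 2 + 1 → G' k = 0 := by
    intro k hk
    rcases (by omega : k < t ∨ k = t ∨ k = t + 1 ∨ k = t + 2) with h | h | h | h
    · have := eqA k h; linarith
    · rw [h]; exact ht
    · rw [h]; exact ht1
    · rw [h]
      have hsumv : ∑ k ∈ Finset.range t, G' k = 0 := by
        refine Finset.sum_eq_zero ?_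
        intro k hk
        have := eqA k (Finset.mem_range.mp hk)
        linarith
      rw [hsumv] at eqC
      linarith
  intro i
  have : g i = G' (i : ℕ) := by
    rw [← hGG i, hGdef]
    simp [i.2]
  rw [this]
  exact hall _ (i : Fin (t + 2 + 1)).isLt
end

section
/- (Distance decay for the steepest descent exchange rule.) Let z, x_1, …, x_ℓ ∈ ℝ^d, let S ⊆ {1, …, ℓ} be nonempty, and let y be the point of conv{x_i : i ∈ S} nearest to z (i.e. y minimizes ‖x − z‖ over x ∈ conv{x_i : i ∈ S}). Suppose there exists i_1 ∈ S with y ∈ conv{x_i : i ∈ S \ {i_1}}, and there exists i_2 ∈ {1, …, ℓ} with ⟨y − z, x_{i_2} − y⟩ < 0. Then dist(z, conv{x_i : i ∈ (S \ {i_1}) ∪ {i_2}}) < dist(z, conv{x_i : i ∈ S}). -/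
open RealInnerProductSpace

/-- Distance decay for the steepest descent exchange rule: if `y` is the point
of `conv{x_i : i ∈ S}` nearest to `z`, `y` still lies in the convex hull after
removing `i_1` from `S`, and `⟪y − z, x_{i_2} − y⟫ < 0` for some index `i_2`,
then exchanging `i_1` for `i_2` strictly decreases the distance from `z` to
the subpolytope. -/
theorem steepest_descent_exchange_distance_decay (d ℓ : ℕ)
    (z : EuclideanSpace ℝ (Fin d)) (x : Fin ℓ → EuclideanSpace ℝ (Fin d))
    (S : Finset (Fin ℓ)) (hS : S.Nonempty)
    (y : EuclideanSpace ℝ (Fin d))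
    (hyS : y ∈ convexHull ℝ (x '' ↑S))
    (hymin : ∀ p ∈ convexHull ℝ (x '' ↑S), ‖y - z‖ ≤ ‖p - z‖)
    (i₁ : Fin ℓ) (hi₁ : i₁ ∈ S)
    (hyErase : y ∈ convexHull ℝ (x '' ↑(S.erase i₁)))
    (i₂ : Fin ℓ) (hi₂ : ⟪y - z, x i₂ - y⟫ < 0) :
    Metric.infDist z (convexHull ℝ (x '' ↑(insert i₂ (S.erase i₁)))) <
      Metric.infDist z (convexHull ℝ (x '' ↑S)) := by
  set v : EuclideanSpace ℝ (Fin d) := x i₂ - y with hv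
  set c : ℝ := -⟪y - z, v⟫ with hc
  have hcpos : 0 < c := by rw [hc]; linarith
  have hvne : v ≠ 0 := by
    intro h
    rw [h] at hc
    simp [hc] at hcpos
  have hvsq : 0 < ‖v‖ ^ 2 := pow_pos (norm_pos_iff.mpr hvne) 2
  set t : ℝ := min 1 (c / ‖v‖ ^ 2) with ht
  have htpos : 0 < t := lt_min one_pos (by positivity)
  have ht1 : t ≤ 1 := min_le_left _ _
  have htv : t * ‖v‖ ^ 2 ≤ c := by
    calc t * ‖v‖ ^ 2 ≤ (c / ‖v‖ ^ 2) * ‖v‖ ^ 2 := by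
          apply mul_le_mul_of_nonneg_right (min_le_right _ _) (le_of_lt hvsq)
      _ = c := by field_simp
  set p : EuclideanSpace ℝ (Fin d) := y + t • v with hp
  -- p is in the new hull
  have hyT : y ∈ convexHull ℝ (x '' ↑(insert i₂ (S.erase i₁))) := by
    apply convexHull_mono _ hyErase
    apply Set.image_mono
    intro a ha
    simp at ha ⊢
    tauto
  have hxT : x i₂ ∈ convexHull ℝ (x '' ↑(insert i₂ (S.erase i₁))) := by
    apply subset_convexHull
    exact Set.mem_image_of_mem _ (by simp)
  have hpT : p ∈ convexHull ℝ (x '' ↑(insert i₂ (S.erase i₁))) := by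
    have hconv := convex_convexHull ℝ (x '' ↑(insert i₂ (S.erase i₁)))
    have := hconv hyT hxT (by linarith : (0:ℝ) ≤ 1 - t) (le_of_lt htpos) (by ring)
    convert this using 1
    rw [hp, hv]
    module
  -- ‖p - z‖² < ‖y - z‖²
  have hkey : ‖p - z‖ ^ 2 < ‖y - z‖ ^ 2 := by
    have hpz : p - z = (y - z) + t • v := by rw [hp]; abel
    have : ‖p - z‖ ^ 2 = ‖y - z‖ ^ 2 + 2 * (t * ⟪y - z, v⟫) + t ^ 2 * ‖v‖ ^ 2 := by
      rw [hpz, @norm_add_sq_real, real_inner_smul_right, norm_smul]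
      rw [Real.norm_eq_abs, mul_pow, sq_abs]
    rw [this]
    have h1 : t * ⟪y - z, v⟫ = -(t * c) := by rw [hc]; ring
    have h2 : t ^ 2 * ‖v‖ ^ 2 ≤ t * c := by
      calc t ^ 2 * ‖v‖ ^ 2 = t * (t * ‖v‖ ^ 2) := by ring
        _ ≤ t * c := by
            apply mul_le_mul_of_nonneg_left htv (le_of_lt htpos)
    nlinarith
  have hnorm : ‖p - z‖ < ‖y - z‖ := by
    have h1 : (0:ℝ) ≤ ‖p - z‖ := norm_nonneg _
    have h2 : (0:ℝ) ≤ ‖y - z‖ := norm_nonneg _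
    nlinarith
  -- infDist z (hull S) = ‖y - z‖
  have hSne : (convexHull ℝ (x '' ↑S)).Nonempty := ⟨y, hyS⟩
  have hge : ‖y - z‖ ≤ Metric.infDist z (convexHull ℝ (x '' ↑S)) := by
    by_contra h
    push_neg at h
    obtain ⟨q, hq, hqd⟩ := (Metric.infDist_lt_iff hSne).1 h
    have := hymin q hq
    rw [dist_eq_norm, norm_sub_rev] at hqd
    linarith
  have hle : Metric.infDist z (convexHull ℝ (x '' ↑(insert i₂ (S.erase i₁)))) ≤ ‖p - z‖ := by
    have := Metric.infDist_le_dist_of_mem (x := z) hpT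
    rwa [dist_eq_norm, norm_sub_rev] at this
  linarith
end

section
/- Let z, x_1, …, x_ℓ ∈ ℝ^d, P = conv{x_1, …, x_ℓ}, and let x_* ∈ P be a minimizer of ‖x − z‖ over x ∈ P. If y ∈ P satisfies ⟨y − z, x_i − y⟩ ≥ −η for all i ∈ {1, …, ℓ} and some η > 0, then ‖y − x_*‖ ≤ √η. -/
open RealInnerProductSpace

/-- If `x_*` minimizes `‖x − z‖` over `P = conv{x_1, …, x_ℓ}` and `y ∈ P`
satisfies `⟪y − z, x_i − y⟫ ≥ −η` for all `i` and some `η > 0`, then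
`‖y − x_*‖ ≤ √η`. -/
theorem approx_opt_implies_close (d ℓ : ℕ) (z : EuclideanSpace ℝ (Fin d))
    (x : Fin ℓ → EuclideanSpace ℝ (Fin d))
    (xstar : EuclideanSpace ℝ (Fin d))
    (hxstar : xstar ∈ convexHull ℝ (Set.range x))
    (hxstarMin : ∀ p ∈ convexHull ℝ (Set.range x), ‖xstar - z‖ ≤ ‖p - z‖)
    (y : EuclideanSpace ℝ (Fin d)) (hy : y ∈ convexHull ℝ (Set.range x))
    (η : ℝ) (hη : 0 < η)
    (happrox : ∀ i : Fin ℓ, -η ≤ ⟪y - z, x i - y⟫) :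
    ‖y - xstar‖ ≤ Real.sqrt η := by
  set K := convexHull ℝ (Set.range x)
  have hK : Convex ℝ K := convex_convexHull ℝ _
  -- variational inequality for the projection xstar
  have hinf : ‖z - xstar‖ = ⨅ w : K, ‖z - w‖ := by
    haveI : Nonempty K := ⟨⟨xstar, hxstar⟩⟩
    apply le_antisymm
    · apply le_ciInf
      intro w
      rw [norm_sub_rev, norm_sub_rev z]
      exact hxstarMin w w.2
    · have hbdd : BddBelow (Set.range fun w : K => ‖z - (w : EuclideanSpace ℝ (Fin d))‖) := by
        refine ⟨0, ?_⟩
        rintro _ ⟨w, rfl⟩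
        exact norm_nonneg _
      exact ciInf_le hbdd ⟨xstar, hxstar⟩
  have hvar : ∀ w ∈ K, ⟪z - xstar, w - xstar⟫ ≤ 0 :=
    (norm_eq_iInf_iff_real_inner_le_zero hK hxstar).mp hinf
  -- extend happrox to the hull
  have hhull : ∀ p ∈ K, -η ≤ ⟪y - z, p - y⟫ := by
    intro p hp
    have hsub : K ⊆ {p | -η ≤ ⟪y - z, p - y⟫} := by
      apply convexHull_min
      · rintro _ ⟨i, rfl⟩; exact happrox i
      · have : {p : EuclideanSpace ℝ (Fin d) | -η ≤ ⟪y - z, p - y⟫}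
            = {p | -η + ⟪y - z, y⟫ ≤ ⟪y - z, p⟫} := by
          ext q; simp [inner_sub_right]; constructor <;> intro h <;> linarith
        rw [this]
        exact convex_halfSpace_ge (by exact ⟨fun a b => inner_add_right _ _ _,
          fun c a => real_inner_smul_right _ _ _⟩) _
    exact hsub hp
  have h1 : -η ≤ ⟪y - z, xstar - y⟫ := hhull xstar hxstar
  have h2 : ⟪z - xstar, y - xstar⟫ ≤ 0 := hvar y hy
  have key : ‖y - xstar‖ ^ 2 ≤ η := by
    have expand : ‖y - xstar‖ ^ 2 = ⟪y - z, y - xstar⟫ + ⟪z - xstar, y - xstar⟫ := by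
      rw [← real_inner_self_eq_norm_sq]
      rw [← inner_add_left]
      congr 1
      abel
    have h1' : ⟪y - z, y - xstar⟫ ≤ η := by
      have : ⟪y - z, xstar - y⟫ = -⟪y - z, y - xstar⟫ := by
        rw [← inner_neg_right]; congr 1; abel
      linarith [h1, this ▸ h1]
    linarith [expand ▸ (add_le_add h1' h2)]
  calc ‖y - xstar‖ = Real.sqrt (‖y - xstar‖ ^ 2) := by
        rw [Real.sqrt_sq (norm_nonneg _)]
    _ ≤ Real.sqrt η := Real.sqrt_le_sqrt key
end

section
/- Let z, x_1, …, x_ℓ ∈ ℝ^d, P = conv{x_1, …, x_ℓ}, and let x_* ∈ P be a minimizer of ‖x − z‖ over x ∈ P. If y ∈ P satisfies ‖y − x_*‖ ≤ ε for some ε > 0, then for every i ∈ {1, …, ℓ} one has ⟨y − z, x_i − y⟩ ≥ −(diam(P) + dist(z, P)) ε; in particular, y satisfies ⟨y − z, x_i − y⟩ ≥ −η for all i whenever η ≥ (diam(P) + dist(z, P)) ε. -/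
open RealInnerProductSpace

set_option maxHeartbeats 1000000

/-- If `x_*` minimizes `‖x − z‖` over `P = conv{x_1, …, x_ℓ}`, `D` is the
maximum pairwise distance `max_{i,j} ‖x_i − x_j‖` (the diameter of `P`), and
`y ∈ P` satisfies `‖y − x_*‖ ≤ ε` for some `ε > 0`, then
`⟪y − z, x_i − y⟫ ≥ −(D + dist(z, P)) ε` for every `i`; in particular
`⟪y − z, x_i − y⟫ ≥ −η` for every `η ≥ (D + dist(z, P)) ε`. -/
theorem close_implies_approx_opt (d ℓ : ℕ) (z : EuclideanSpace ℝ (Fin d))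
    (x : Fin ℓ → EuclideanSpace ℝ (Fin d))
    (D : ℝ) (hD : IsGreatest (Set.range fun p : Fin ℓ × Fin ℓ => ‖x p.1 - x p.2‖) D)
    (xstar : EuclideanSpace ℝ (Fin d))
    (hxstar : xstar ∈ convexHull ℝ (Set.range x))
    (hxstarMin : ∀ p ∈ convexHull ℝ (Set.range x), ‖xstar - z‖ ≤ ‖p - z‖)
    (y : EuclideanSpace ℝ (Fin d)) (hy : y ∈ convexHull ℝ (Set.range x))
    (ε : ℝ) (hε : 0 < ε) (hclose : ‖y - xstar‖ ≤ ε) :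
    (∀ i : Fin ℓ,
        -((D + Metric.infDist z (convexHull ℝ (Set.range x))) * ε) ≤
          ⟪y - z, x i - y⟫) ∧
      ∀ η : ℝ, (D + Metric.infDist z (convexHull ℝ (Set.range x))) * ε ≤ η →
        ∀ i : Fin ℓ, -η ≤ ⟪y - z, x i - y⟫ := by
  set P := convexHull ℝ (Set.range x) with hP
  have hconv : Convex ℝ P := convex_convexHull ℝ _
  have hD0 : 0 ≤ D := by
    obtain ⟨p, hp⟩ := hD.1
    rw [← hp]; positivity
  -- the infimum characterization
  haveI : Nonempty ↥P := ⟨⟨xstar, hxstar⟩⟩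
  have hbdd : BddBelow (Set.range fun w : ↥P => ‖z - (w : EuclideanSpace ℝ (Fin d))‖) := by
    refine ⟨0, ?_⟩
    rintro a ⟨w, rfl⟩
    exact norm_nonneg _
  have hinf : ‖z - xstar‖ = ⨅ w : ↥P, ‖z - (w : EuclideanSpace ℝ (Fin d))‖ := by
    apply le_antisymm
    · apply le_ciInf
      intro w
      rw [norm_sub_rev z, norm_sub_rev z (w : EuclideanSpace ℝ (Fin d))]
      exact hxstarMin w w.2
    · exact ciInf_le hbdd ⟨xstar, hxstar⟩
  have hvar : ∀ w ∈ P, ⟪z - xstar, w - xstar⟫ ≤ 0 :=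
    (norm_eq_iInf_iff_real_inner_le_zero hconv hxstar).1 hinf
  -- infDist equals ‖xstar - z‖
  have hdist : Metric.infDist z P = ‖xstar - z‖ := by
    apply le_antisymm
    · calc Metric.infDist z P ≤ dist z xstar := Metric.infDist_le_dist_of_mem hxstar
        _ = ‖xstar - z‖ := by rw [dist_eq_norm, norm_sub_rev]
    · by_contra h
      push_neg at h
      obtain ⟨w, hw, hlt⟩ := (Metric.infDist_lt_iff ⟨xstar, hxstar⟩).1 h
      rw [dist_eq_norm, norm_sub_rev z w] at hlt
      exact absurd (hxstarMin w hw) (not_le.2 hlt)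
  -- diameter bound
  have hDy : ∀ i : Fin ℓ, ‖x i - y‖ ≤ D := by
    intro i
    have hball : P ⊆ Metric.closedBall (x i) D := by
      apply convexHull_min _ (convex_closedBall _ _)
      rintro w ⟨j, rfl⟩
      simp only [Metric.mem_closedBall, dist_eq_norm]
      exact hD.2 ⟨⟨j, i⟩, rfl⟩
    have := hball hy
    rw [Metric.mem_closedBall, dist_comm, dist_eq_norm] at this
    exact this
  have key : ∀ i : Fin ℓ,
      -((D + Metric.infDist z P) * ε) ≤ ⟪y - z, x i - y⟫ := by
    intro i
    have hxi : x i ∈ P := subset_convexHull ℝ _ ⟨i, rfl⟩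
    have h1 : 0 ≤ ⟪xstar - z, x i - xstar⟫ := by
      have := hvar (x i) hxi
      have e : ⟪z - xstar, x i - xstar⟫ = -⟪xstar - z, x i - xstar⟫ := by
        rw [← inner_neg_left]; congr 1; abel
      linarith [e ▸ this]
    have h2 : |⟪xstar - z, xstar - y⟫| ≤ ‖xstar - z‖ * ε := by
      calc |⟪xstar - z, xstar - y⟫| ≤ ‖xstar - z‖ * ‖xstar - y‖ :=
            abs_real_inner_le_norm _ _
        _ ≤ ‖xstar - z‖ * ε := by
            apply mul_le_mul_of_nonneg_left _ (norm_nonneg _)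
            rw [norm_sub_rev]; exact hclose
    have h3 : |⟪y - xstar, x i - y⟫| ≤ ε * D := by
      calc |⟪y - xstar, x i - y⟫| ≤ ‖y - xstar‖ * ‖x i - y‖ :=
            abs_real_inner_le_norm _ _
        _ ≤ ε * D := mul_le_mul hclose (hDy i) (norm_nonneg _) hε.le
    have heq : ⟪y - z, x i - y⟫ =
        ⟪xstar - z, x i - xstar⟫ + ⟪xstar - z, xstar - y⟫ + ⟪y - xstar, x i - y⟫ := by
      have e1 : (y - z : EuclideanSpace ℝ (Fin d)) = (xstar - z) + (y - xstar) := by abel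
      have e2 : (x i - y : EuclideanSpace ℝ (Fin d)) = (x i - xstar) + (xstar - y) := by abel
      rw [e1, inner_add_left, e2, inner_add_right]
    rw [hdist, heq]
    have h2' := abs_le.1 h2
    have h3' := abs_le.1 h3
    nlinarith [h2'.1, h3'.1]
  refine ⟨key, fun η hη i => ?_⟩
  have := key i
  linarith
end

section
/- Let z, x_1, …, x_ℓ ∈ ℝ^d and P = conv{x_1, …, x_ℓ}. If y ∈ P satisfies ‖y − z‖ < ε for some ε > 0, then for every i ∈ {1, …, ℓ} one has ⟨y − z, x_i − y⟩ ≥ −2(diam(P) + dist(z, P)) ε. (If the minimizer x_* of ‖x − z‖ over P satisfies ‖x_* − z‖ ≤ ‖y − z‖ < ε, then ‖x_* − y‖ < 2ε and the approximate optimality estimate applies.) -/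
open RealInnerProductSpace

/-- If `y ∈ P = conv{x_1, …, x_ℓ}` satisfies `‖y − z‖ < ε` for some `ε > 0`,
and `D` is the maximum pairwise distance `max_{i,j} ‖x_i − x_j‖` (the diameter
of `P`), then `⟪y − z, x_i − y⟫ ≥ −2(D + dist(z, P)) ε` for every `i`. -/
theorem small_distance_implies_approx_opt (d ℓ : ℕ) (z : EuclideanSpace ℝ (Fin d))
    (x : Fin ℓ → EuclideanSpace ℝ (Fin d))
    (D : ℝ) (hD : IsGreatest (Set.range fun p : Fin ℓ × Fin ℓ => ‖x p.1 - x p.2‖) D)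
    (y : EuclideanSpace ℝ (Fin d)) (hy : y ∈ convexHull ℝ (Set.range x))
    (ε : ℝ) (hε : 0 < ε) (hsmall : ‖y - z‖ < ε) :
    ∀ i : Fin ℓ,
      -(2 * (D + Metric.infDist z (convexHull ℝ (Set.range x))) * ε) ≤
        ⟪y - z, x i - y⟫ := by
  intro i
  -- D ≥ 0
  obtain ⟨p, hp⟩ := hD.1
  have hD0 : 0 ≤ D := hp ▸ norm_nonneg _
  have ht0 : 0 ≤ Metric.infDist z (convexHull ℝ (Set.range x)) := Metric.infDist_nonneg
  -- convex hull is contained in the closed ball around x i of radius D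
  have hsub : convexHull ℝ (Set.range x) ⊆ Metric.closedBall (x i) D := by
    apply convexHull_min _ (convex_closedBall _ _)
    rintro _ ⟨j, rfl⟩
    simpa [Metric.mem_closedBall, dist_eq_norm] using hD.2 ⟨(j, i), rfl⟩
  have hxy : ‖x i - y‖ ≤ D := by
    have := hsub hy
    rw [Metric.mem_closedBall, dist_eq_norm] at this
    calc ‖x i - y‖ = ‖y - x i‖ := by rw [norm_sub_rev]
    _ ≤ D := this
  have hCS : |⟪y - z, x i - y⟫| ≤ ‖y - z‖ * ‖x i - y‖ := abs_real_inner_le_norm _ _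
  have h1 : -(‖y - z‖ * ‖x i - y‖) ≤ ⟪y - z, x i - y⟫ := neg_le_of_abs_le hCS
  have hnz : 0 ≤ ‖y - z‖ := norm_nonneg _
  nlinarith [norm_nonneg (x i - y)]
end

section
/- (Quantitative one-step distance decrease along a segment.) Let Q ⊆ ℝ^d be a convex set, z ∈ ℝ^d, and y, x ∈ Q. Suppose D > 0 and η satisfy 0 < η ≤ D², ‖x − y‖ ≤ D, and ⟨y − z, x − y⟩ ≤ −η. Then dist(z, Q)² ≤ ‖y − z‖² − η² / D². (The point (1 − t_*) y + t_* x with t_* = η / D² ∈ (0, 1] realizes this bound.) -/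
open RealInnerProductSpace

/-- Quantitative one-step distance decrease along a segment: if `Q` is convex,
`y, x ∈ Q`, `0 < η ≤ D²`, `‖x − y‖ ≤ D`, and `⟪y − z, x − y⟫ ≤ −η`, then
`dist(z, Q)² ≤ ‖y − z‖² − η² / D²`. -/
theorem one_step_distance_decrease (d : ℕ) (Q : Set (EuclideanSpace ℝ (Fin d)))
    (hQ : Convex ℝ Q) (z y x : EuclideanSpace ℝ (Fin d))
    (hy : y ∈ Q) (hx : x ∈ Q)
    (D η : ℝ) (hD : 0 < D) (hη : 0 < η) (hηD : η ≤ D ^ 2)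
    (hxy : ‖x - y‖ ≤ D) (hinner : ⟪y - z, x - y⟫ ≤ -η) :
    Metric.infDist z Q ^ 2 ≤ ‖y - z‖ ^ 2 - η ^ 2 / D ^ 2 := by
  have hD2 : (0:ℝ) < D ^ 2 := by positivity
  set t : ℝ := η / D ^ 2 with ht
  have ht0 : 0 < t := by positivity
  have ht1 : t ≤ 1 := by
    rw [ht, div_le_one hD2]; exact hηD
  set w : EuclideanSpace ℝ (Fin d) := y + t • (x - y) with hw
  have hwQ : w ∈ Q := by
    have := hQ hy hx (a := 1 - t) (b := t) (by linarith) (le_of_lt ht0) (by ring)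
    convert this using 1
    rw [hw]
    module
  have hkey : ‖w - z‖ ^ 2 ≤ ‖y - z‖ ^ 2 - η ^ 2 / D ^ 2 := by
    have hexp : w - z = (y - z) + t • (x - y) := by rw [hw]; abel
    have h1 : ‖w - z‖ ^ 2 = ‖y - z‖ ^ 2 + 2 * t * ⟪y - z, x - y⟫ + t ^ 2 * ‖x - y‖ ^ 2 := by
      rw [hexp, @norm_add_sq_real, real_inner_smul_right, norm_smul, Real.norm_eq_abs,
        abs_of_pos ht0]
      ring
    have h2 : t ^ 2 * ‖x - y‖ ^ 2 ≤ t ^ 2 * D ^ 2 := by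
      apply mul_le_mul_of_nonneg_left _ (by positivity)
      exact pow_le_pow_left₀ (norm_nonneg _) hxy 2
    have h3 : 2 * t * ⟪y - z, x - y⟫ ≤ 2 * t * (-η) := by
      apply mul_le_mul_of_nonneg_left hinner (by positivity)
    have : t ^ 2 * D ^ 2 = η ^ 2 / D ^ 2 := by
      rw [ht]; field_simp
    have h4 : t * η = η ^ 2 / D ^ 2 := by
      rw [ht]; field_simp
    nlinarith [h1, h2, h3, this, h4]
  have hd : Metric.infDist z Q ≤ ‖w - z‖ := by
    rw [show ‖w - z‖ = dist z w by rw [dist_eq_norm]; rw [norm_sub_rev]]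
    exact Metric.infDist_le_dist_of_mem hwQ
  have h0 : 0 ≤ Metric.infDist z Q := Metric.infDist_nonneg
  nlinarith [hd, hkey, h0, norm_nonneg (w - z)]
end

section
/- (Distance decay for the steepest descent exchange rule for two polytopes: both sides updated.) Let x_1, …, x_ℓ, y_1, …, y_m ∈ ℝ^d, let S ⊆ {1, …, ℓ} and T ⊆ {1, …, m} be nonempty, and let (v, w) minimize ‖x − y‖ over conv{x_i : i ∈ S} × conv{y_j : j ∈ T}. Suppose there exist i_1 ∈ S with v ∈ conv{x_i : i ∈ S \ {i_1}} and j_1 ∈ T with w ∈ conv{y_j : j ∈ T \ {j_1}}, and there exist i_2 ∈ {1, …, ℓ} with ⟨v − w, x_{i_2} − v⟩ < 0 and j_2 ∈ {1, …, m} with ⟨w − v, y_{j_2} − w⟩ < 0. Then dist(conv{x_i : i ∈ (S \ {i_1}) ∪ {i_2}}, conv{y_j : j ∈ (T \ {j_1}) ∪ {j_2}}) < dist(conv{x_i : i ∈ S}, conv{y_j : j ∈ T}). -/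
open RealInnerProductSpace

/-- The Euclidean distance between two sets:
`dist(A, B) = inf{ ‖a − b‖ : a ∈ A, b ∈ B }`. -/
noncomputable def setDist {E : Type*} [NormedAddCommGroup E] (A B : Set E) : ℝ :=
  sInf {r : ℝ | ∃ a ∈ A, ∃ b ∈ B, r = ‖a - b‖}

/-- Distance decay for the steepest descent exchange rule for two polytopes,
both sides updated: if `(v, w)` minimizes `‖p − q‖` over
`conv{x_i : i ∈ S} × conv{y_j : j ∈ T}`, `v` (resp. `w`) remains in the hull
after removing `i_1` (resp. `j_1`), and `⟪v − w, x_{i_2} − v⟫ < 0`,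
`⟪w − v, y_{j_2} − w⟫ < 0`, then the exchange strictly decreases the distance
between the two subpolytopes. -/
theorem steepest_descent_exchange_two_polytopes (d ℓ m : ℕ)
    (x : Fin ℓ → EuclideanSpace ℝ (Fin d)) (y : Fin m → EuclideanSpace ℝ (Fin d))
    (S : Finset (Fin ℓ)) (T : Finset (Fin m)) (hS : S.Nonempty) (hT : T.Nonempty)
    (v w : EuclideanSpace ℝ (Fin d))
    (hv : v ∈ convexHull ℝ (x '' ↑S)) (hw : w ∈ convexHull ℝ (y '' ↑T))
    (hmin : ∀ p ∈ convexHull ℝ (x '' ↑S), ∀ q ∈ convexHull ℝ (y '' ↑T),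
      ‖v - w‖ ≤ ‖p - q‖)
    (i₁ : Fin ℓ) (hi₁ : i₁ ∈ S) (hv₁ : v ∈ convexHull ℝ (x '' ↑(S.erase i₁)))
    (j₁ : Fin m) (hj₁ : j₁ ∈ T) (hw₁ : w ∈ convexHull ℝ (y '' ↑(T.erase j₁)))
    (i₂ : Fin ℓ) (hi₂ : ⟪v - w, x i₂ - v⟫ < 0)
    (j₂ : Fin m) (hj₂ : ⟪w - v, y j₂ - w⟫ < 0) :
    setDist (convexHull ℝ (x '' ↑(insert i₂ (S.erase i₁))))
        (convexHull ℝ (y '' ↑(insert j₂ (T.erase j₁)))) <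
      setDist (convexHull ℝ (x '' ↑S)) (convexHull ℝ (y '' ↑T)) := by
  classical
  set a := v - w with ha
  set u := (x i₂ - v) - (y j₂ - w) with hu
  have hc : ⟪a, u⟫ < 0 := by
    have h1 : ⟪v - w, y j₂ - w⟫ = -⟪w - v, y j₂ - w⟫ := by
      rw [show w - v = -(v - w) by abel, inner_neg_left]; ring
    have : ⟪a, u⟫ = ⟪v - w, x i₂ - v⟫ - ⟪v - w, y j₂ - w⟫ := by
      rw [ha, hu, inner_sub_right]
    rw [this, h1]; linarith
  have hu0 : u ≠ 0 := by
    intro h; rw [h, inner_zero_right] at hc; exact lt_irrefl 0 hc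
  have hunorm : (0:ℝ) < ‖u‖^2 := pow_pos (norm_pos_iff.mpr hu0) 2
  set c := ⟪a, u⟫ with hcdef
  set t : ℝ := min 1 (-c / ‖u‖^2) with htdef
  have ht0 : 0 < t := lt_min one_pos (div_pos (by linarith) hunorm)
  have ht1 : t ≤ 1 := min_le_left _ _
  have htc : t * ‖u‖^2 ≤ -c := by
    have := min_le_right 1 (-c / ‖u‖^2)
    calc t * ‖u‖^2 ≤ (-c / ‖u‖^2) * ‖u‖^2 := by nlinarith
      _ = -c := div_mul_cancel₀ (-c) (ne_of_gt hunorm)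
  set p : EuclideanSpace ℝ (Fin d) := v + t • (x i₂ - v) with hp
  set q : EuclideanSpace ℝ (Fin d) := w + t • (y j₂ - w) with hq
  -- membership of p
  have hXsub : x '' ↑(S.erase i₁) ⊆ x '' ↑(insert i₂ (S.erase i₁)) := by
    apply Set.image_mono
    intro i hi
    simp only [Finset.coe_insert, Set.mem_insert_iff] at *
    exact Or.inr hi
  have hvX : v ∈ convexHull ℝ (x '' ↑(insert i₂ (S.erase i₁))) :=
    convexHull_mono hXsub hv₁
  have hi₂X : x i₂ ∈ convexHull ℝ (x '' ↑(insert i₂ (S.erase i₁))) := by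
    apply subset_convexHull
    exact ⟨i₂, by simp, rfl⟩
  have hpX : p ∈ convexHull ℝ (x '' ↑(insert i₂ (S.erase i₁))) := by
    have := (convex_convexHull ℝ (x '' ↑(insert i₂ (S.erase i₁)))) hvX hi₂X
      (by linarith : (0:ℝ) ≤ 1 - t) (le_of_lt ht0) (by ring)
    have heq : p = (1 - t) • v + t • x i₂ := by
      rw [hp, smul_sub, sub_smul, one_smul]; abel
    rw [heq]; exact this
  have hYsub : y '' ↑(T.erase j₁) ⊆ y '' ↑(insert j₂ (T.erase j₁)) := by
    apply Set.image_mono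
    intro j hj
    simp only [Finset.coe_insert, Set.mem_insert_iff] at *
    exact Or.inr hj
  have hwY : w ∈ convexHull ℝ (y '' ↑(insert j₂ (T.erase j₁))) :=
    convexHull_mono hYsub hw₁
  have hj₂Y : y j₂ ∈ convexHull ℝ (y '' ↑(insert j₂ (T.erase j₁))) := by
    apply subset_convexHull
    exact ⟨j₂, by simp, rfl⟩
  have hqY : q ∈ convexHull ℝ (y '' ↑(insert j₂ (T.erase j₁))) := by
    have := (convex_convexHull ℝ (y '' ↑(insert j₂ (T.erase j₁)))) hwY hj₂Y
      (by linarith : (0:ℝ) ≤ 1 - t) (le_of_lt ht0) (by ring)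
    have heq : q = (1 - t) • w + t • y j₂ := by
      rw [hq, smul_sub, sub_smul, one_smul]; abel
    rw [heq]; exact this
  -- the key norm estimate
  have hpq : p - q = a + t • u := by
    rw [hp, hq, ha, hu]; module
  have hsq : ‖p - q‖^2 < ‖v - w‖^2 := by
    rw [hpq]
    have expand : ‖a + t • u‖^2 = ‖a‖^2 + 2 * (t * c) + t^2 * ‖u‖^2 := by
      rw [norm_add_sq_real, real_inner_smul_right, norm_smul,
        Real.norm_eq_abs, mul_pow, sq_abs]
    rw [expand, ← ha]
    nlinarith
  have hlt : ‖p - q‖ < ‖v - w‖ := by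
    have := lt_of_pow_lt_pow_left₀ 2 (norm_nonneg (v - w)) hsq
    exact this
  -- bound the setDists
  have hbdd : ∀ (A B : Set (EuclideanSpace ℝ (Fin d))),
      BddBelow {r : ℝ | ∃ a ∈ A, ∃ b ∈ B, r = ‖a - b‖} := by
    intro A B
    exact ⟨0, fun r ⟨a, _, b, _, hr⟩ => hr ▸ norm_nonneg _⟩
  have hnew : setDist (convexHull ℝ (x '' ↑(insert i₂ (S.erase i₁))))
      (convexHull ℝ (y '' ↑(insert j₂ (T.erase j₁)))) ≤ ‖p - q‖ :=
    csInf_le (hbdd _ _) ⟨p, hpX, q, hqY, rfl⟩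
  have hold : ‖v - w‖ ≤ setDist (convexHull ℝ (x '' ↑S)) (convexHull ℝ (y '' ↑T)) := by
    refine le_csInf ⟨‖v - w‖, ⟨v, hv, w, hw, rfl⟩⟩ ?_
    rintro r ⟨p', hp', q', hq', rfl⟩
    exact hmin p' hp' q' hq'
  calc setDist (convexHull ℝ (x '' ↑(insert i₂ (S.erase i₁))))
        (convexHull ℝ (y '' ↑(insert j₂ (T.erase j₁))))
      ≤ ‖p - q‖ := hnew
    _ < ‖v - w‖ := hlt
    _ ≤ _ := hold
end

section
/- (Distance decay for the steepest descent exchange rule for two polytopes: one side updated.) Let x_1, …, x_ℓ, y_1, …, y_m ∈ ℝ^d, let S ⊆ {1, …, ℓ} and T ⊆ {1, …, m} be nonempty, and let (v, w) minimize ‖x − y‖ over conv{x_i : i ∈ S} × conv{y_j : j ∈ T}. Suppose there exists i_1 ∈ S with v ∈ conv{x_i : i ∈ S \ {i_1}}, and there exists i_2 ∈ {1, …, ℓ} with ⟨v − w, x_{i_2} − v⟩ < 0. Then dist(conv{x_i : i ∈ (S \ {i_1}) ∪ {i_2}}, conv{y_j : j ∈ T}) < dist(conv{x_i : i ∈ S},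 conv{y_j : j ∈ T}). -/
set_option maxHeartbeats 1000000


open RealInnerProductSpace

/-- Distance decay for the steepest descent exchange rule for two polytopes,
one side updated: if `(v, w)` minimizes `‖p − q‖` over
`conv{x_i : i ∈ S} × conv{y_j : j ∈ T}`, `v` remains in the hull after
removing `i_1`, and `⟪v − w, x_{i_2} − v⟫ < 0`, then exchanging `i_1` for
`i_2` strictly decreases the distance between the two polytopes. -/
theorem steepest_descent_exchange_one_side (d ℓ m : ℕ)
    (x : Fin ℓ → EuclideanSpace ℝ (Fin d)) (y : Fin m → EuclideanSpace ℝ (Fin d))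
    (S : Finset (Fin ℓ)) (T : Finset (Fin m)) (hS : S.Nonempty) (hT : T.Nonempty)
    (v w : EuclideanSpace ℝ (Fin d))
    (hv : v ∈ convexHull ℝ (x '' ↑S)) (hw : w ∈ convexHull ℝ (y '' ↑T))
    (hmin : ∀ p ∈ convexHull ℝ (x '' ↑S), ∀ q ∈ convexHull ℝ (y '' ↑T),
      ‖v - w‖ ≤ ‖p - q‖)
    (i₁ : Fin ℓ) (hi₁ : i₁ ∈ S) (hv₁ : v ∈ convexHull ℝ (x '' ↑(S.erase i₁)))
    (i₂ : Fin ℓ) (hi₂ : ⟪v - w, x i₂ - v⟫ < 0) :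
    setDist (convexHull ℝ (x '' ↑(insert i₂ (S.erase i₁))))
        (convexHull ℝ (y '' ↑T)) <
      setDist (convexHull ℝ (x '' ↑S)) (convexHull ℝ (y '' ↑T)) := by
  set u : EuclideanSpace ℝ (Fin d) := x i₂ - v with hu
  set c : ℝ := -⟪v - w, u⟫ with hc
  have hc0 : 0 < c := by simp only [hc]; linarith
  have hu0 : u ≠ 0 := by
    intro h
    rw [h] at hi₂
    simp only [inner_zero_right] at hi₂
    exact absurd hi₂ (lt_irrefl 0)
  have hun : (0:ℝ) < ‖u‖ ^ 2 := pow_pos (norm_pos_iff.2 hu0) 2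
  set t : ℝ := min 1 (c / ‖u‖ ^ 2) with ht
  have ht0 : 0 < t := lt_min one_pos (div_pos hc0 hun)
  have ht1 : t ≤ 1 := min_le_left _ _
  have htc : t * ‖u‖ ^ 2 ≤ c := by
    have := min_le_right 1 (c / ‖u‖ ^ 2)
    calc t * ‖u‖ ^ 2 ≤ (c / ‖u‖ ^ 2) * ‖u‖ ^ 2 := by
          exact mul_le_mul_of_nonneg_right this hun.le
      _ = c := by field_simp
  set p : EuclideanSpace ℝ (Fin d) := (1 - t) • v + t • x i₂ with hp
  -- p is in the new hull
  have hvmem : v ∈ convexHull ℝ (x '' ↑(insert i₂ (S.erase i₁))) := by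
    exact convexHull_mono
      (Set.image_mono (Finset.coe_subset.2 (Finset.subset_insert _ _))) hv₁
  have hxmem : x i₂ ∈ convexHull ℝ (x '' ↑(insert i₂ (S.erase i₁))) := by
    exact subset_convexHull ℝ _ ⟨i₂, by simp, rfl⟩
  have hpmem : p ∈ convexHull ℝ (x '' ↑(insert i₂ (S.erase i₁))) :=
    (convex_convexHull ℝ _) hvmem hxmem (by linarith) ht0.le (by ring)
  -- norm estimate
  have hpw : p - w = (v - w) + t • u := by
    simp only [hp, hu]
    module
  have hnorm : ‖p - w‖ < ‖v - w‖ := by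
    have hsq : ‖p - w‖ ^ 2 < ‖v - w‖ ^ 2 := by
      rw [hpw, @norm_add_sq_real]
      have hinner : ⟪v - w, t • u⟫ = t * ⟪v - w, u⟫ := real_inner_smul_right _ _ _
      have hns : ‖t • u‖ ^ 2 = t ^ 2 * ‖u‖ ^ 2 := by
        rw [norm_smul]; rw [mul_pow]; simp [abs_of_pos ht0]
      rw [hinner, hns]
      have h1 : ⟪v - w, u⟫ = -c := by simp [hc]
      rw [h1]
      nlinarith
    exact lt_of_pow_lt_pow_left₀ 2 (norm_nonneg _) hsq
  -- identify old setDist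
  have hbdd : ∀ (A B : Set (EuclideanSpace ℝ (Fin d))),
      BddBelow {r : ℝ | ∃ a ∈ A, ∃ b ∈ B, r = ‖a - b‖} := by
    intro A B
    exact ⟨0, by rintro r ⟨a, _, b, _, rfl⟩; exact norm_nonneg _⟩
  have hold : setDist (convexHull ℝ (x '' ↑S)) (convexHull ℝ (y '' ↑T)) = ‖v - w‖ := by
    apply le_antisymm
    · exact csInf_le (hbdd _ _) ⟨v, hv, w, hw, rfl⟩
    · have hmem : ‖v - w‖ ∈ {r : ℝ | ∃ a ∈ convexHull ℝ (x '' ↑S),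
          ∃ b ∈ convexHull ℝ (y '' ↑T), r = ‖a - b‖} := ⟨v, hv, w, hw, rfl⟩
      apply le_csInf ⟨_, hmem⟩
      rintro r ⟨a, ha, b, hb, rfl⟩
      exact hmin a ha b hb
  have hnew : setDist (convexHull ℝ (x '' ↑(insert i₂ (S.erase i₁))))
      (convexHull ℝ (y '' ↑T)) ≤ ‖p - w‖ :=
    csInf_le (hbdd _ _) ⟨p, hpmem, w, hw, rfl⟩
  rw [hold]
  exact lt_of_le_of_lt hnew hnorm
end

section
/- Let x_1, …, x_ℓ, y_1, …, y_m ∈ ℝ^d, P = conv{x_1, …, x_ℓ}, Q = conv{y_1, …, y_m}, and let (v_*, w_*) ∈ P × Q minimize ‖x − y‖ over P × Q. If a pair (v, w) ∈ P × Q satisfies ⟨v − w, x_i − v⟩ ≥ −η for all i ∈ {1, …, ℓ} and ⟨w − v, y_j − w⟩ ≥ −η for all j ∈ {1, …, m}, for some η > 0, then ‖(v − w) − (v_* − w_*)‖ ≤ √(2η) and ‖v − w‖ ≤ dist(P, Q) + √(2η). -/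
open RealInnerProductSpace

lemma hull_inner_ineq {E : Type*} [NormedAddCommGroup E] [InnerProductSpace ℝ E]
    {s : Set E} {u v : E} {η : ℝ}
    (h : ∀ p ∈ s, -η ≤ ⟪u, p - v⟫) :
    ∀ p ∈ convexHull ℝ s, -η ≤ ⟪u, p - v⟫ := by
  have hconv : Convex ℝ {p : E | -η ≤ ⟪u, p - v⟫} := by
    intro a ha b hb s' t hs ht hst
    simp only [Set.mem_setOf_eq] at *
    have h1 : s' • a + t • b - v = s' • (a - v) + t • (b - v) := by
      rw [smul_sub, smul_sub]
      have h2 : s' • v + t • v = v := by rw [← add_smul, hst, one_smul]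
      rw [sub_add_sub_comm, h2]
    rw [h1, inner_add_right, real_inner_smul_right, real_inner_smul_right]
    have h3 : s' * η + t * η = η := by rw [← add_mul, hst, one_mul]
    nlinarith [mul_le_mul_of_nonneg_left ha hs, mul_le_mul_of_nonneg_left hb ht]
  intro p hp
  exact convexHull_min h hconv hp

/-- If `(v_*, w_*)` minimizes `‖p − q‖` over `P × Q` and `(v, w) ∈ P × Q`
satisfies `⟪v − w, x_i − v⟫ ≥ −η` for all `i` and `⟪w − v, y_j − w⟫ ≥ −η`
for all `j`, for some `η > 0`, then `‖(v − w) − (v_* − w_*)‖ ≤ √(2η)` and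
`‖v − w‖ ≤ dist(P, Q) + √(2η)`. -/
theorem approx_opt_pair_estimates (d ℓ m : ℕ)
    (x : Fin ℓ → EuclideanSpace ℝ (Fin d)) (y : Fin m → EuclideanSpace ℝ (Fin d))
    (vstar wstar : EuclideanSpace ℝ (Fin d))
    (hvstar : vstar ∈ convexHull ℝ (Set.range x))
    (hwstar : wstar ∈ convexHull ℝ (Set.range y))
    (hmin : ∀ p ∈ convexHull ℝ (Set.range x), ∀ q ∈ convexHull ℝ (Set.range y),
      ‖vstar - wstar‖ ≤ ‖p - q‖)
    (v w : EuclideanSpace ℝ (Fin d))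
    (hv : v ∈ convexHull ℝ (Set.range x)) (hw : w ∈ convexHull ℝ (Set.range y))
    (η : ℝ) (hη : 0 < η)
    (hx : ∀ i : Fin ℓ, -η ≤ ⟪v - w, x i - v⟫)
    (hy : ∀ j : Fin m, -η ≤ ⟪w - v, y j - w⟫) :
    ‖(v - w) - (vstar - wstar)‖ ≤ Real.sqrt (2 * η) ∧
      ‖v - w‖ ≤ setDist (convexHull ℝ (Set.range x)) (convexHull ℝ (Set.range y)) +
        Real.sqrt (2 * η) := by
  set u := v - w with hu
  set us := vstar - wstar with hus
  -- extended inequalities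
  have hxall : ∀ p ∈ convexHull ℝ (Set.range x), -η ≤ ⟪u, p - v⟫ := by
    apply hull_inner_ineq
    rintro p ⟨i, rfl⟩; exact hx i
  have hyall : ∀ q ∈ convexHull ℝ (Set.range y), -η ≤ ⟪w - v, q - w⟫ := by
    apply hull_inner_ineq
    rintro q ⟨j, rfl⟩; exact hy j
  have h1 : -η ≤ ⟪u, vstar - v⟫ := hxall vstar hvstar
  have h2 : -η ≤ ⟪w - v, wstar - w⟫ := hyall wstar hwstar
  -- ⟪u, u - us⟫ ≤ 2η
  have key1 : ⟪u, u - us⟫ ≤ 2 * η := by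
    have e : u - us = (v - vstar) - (w - wstar) := by
      simp only [hu, hus]; abel
    have e2 : ⟪u, u - us⟫ = -⟪u, vstar - v⟫ - ⟪w - v, wstar - w⟫ := by
      have e3 : u - us = -(vstar - v) + (wstar - w) := by rw [hu, hus]; abel
      have e4 : (⟪w - v, wstar - w⟫ : ℝ) = -⟪u, wstar - w⟫ := by
        rw [show w - v = -u by rw [hu]; abel, inner_neg_left]
      rw [e3, inner_add_right, inner_neg_right, e4]
      ring
    rw [e2]; linarith
  -- optimality: ⟪us, u - us⟫ ≥ 0
  have key2 : 0 ≤ ⟪us, u - us⟫ := by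
    by_contra hc
    push_neg at hc
    set c := ⟪us, u - us⟫ with hcdef
    set K := ‖u - us‖ ^ 2 with hK
    have hstep : ∀ t : ℝ, 0 < t → t ≤ 1 → 0 ≤ 2 * c + t * K := by
      intro t ht0 ht1
      have hp : (1 - t) • vstar + t • v ∈ convexHull ℝ (Set.range x) :=
        (convex_convexHull ℝ _) hvstar hv (by linarith) ht0.le (by ring)
      have hq : (1 - t) • wstar + t • w ∈ convexHull ℝ (Set.range y) :=
        (convex_convexHull ℝ _) hwstar hw (by linarith) ht0.le (by ring)
      have hle := hmin _ hp _ hq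
      have ediff : ((1 - t) • vstar + t • v) - ((1 - t) • wstar + t • w) = us + t • (u - us) := by
        simp only [hu, hus, smul_sub, sub_smul, one_smul]
        abel
      rw [ediff] at hle
      have hsq : ‖us‖ ^ 2 ≤ ‖us + t • (u - us)‖ ^ 2 := by
        have := norm_nonneg (us + t • (u - us))
        nlinarith [norm_nonneg us]
      have expand : ‖us + t • (u - us)‖ ^ 2 = ‖us‖ ^ 2 + 2 * t * c + t ^ 2 * K := by
        have hthis : (⟪us + t • (u - us), us + t • (u - us)⟫ : ℝ)
            = ⟪us, us⟫ + 2 * t * ⟪us, u - us⟫ + t ^ 2 * ⟪u - us, u - us⟫ := by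
          rw [real_inner_add_add_self, real_inner_smul_right, real_inner_smul_left,
            real_inner_smul_right]
          ring
        rw [hcdef, hK]
        simp only [← real_inner_self_eq_norm_sq]
        exact hthis
      rw [expand] at hsq
      nlinarith
    have hK0 : 0 ≤ K := by positivity
    rcases eq_or_lt_of_le hK0 with hK0' | hKpos
    · have := hstep 1 one_pos le_rfl
      rw [← hK0'] at this
      linarith
    · have ht0 : 0 < -c / K := div_pos (by linarith) hKpos
      rcases le_or_gt (-c / K) 1 with hle1 | hgt1
      · have := hstep (-c / K) ht0 hle1
        rw [div_mul_cancel₀ _ (ne_of_gt hKpos)] at this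
        linarith
      · have := hstep 1 one_pos le_rfl
        have : -c / K > 1 := hgt1
        have hcK : -c > K := by
          rw [gt_iff_lt, lt_div_iff₀ hKpos, one_mul] at this
          exact this
        have := hstep 1 one_pos le_rfl
        nlinarith
  -- first bound
  have hnormsq : ‖u - us‖ ^ 2 ≤ 2 * η := by
    have : ‖u - us‖ ^ 2 = ⟪u, u - us⟫ - ⟪us, u - us⟫ := by
      rw [← real_inner_self_eq_norm_sq, ← inner_sub_left]
    rw [this]; linarith
  have hfirst : ‖u - us‖ ≤ Real.sqrt (2 * η) := by
    rw [show ‖u - us‖ = Real.sqrt (‖u - us‖ ^ 2) by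
      rw [Real.sqrt_sq (norm_nonneg _)]]
    exact Real.sqrt_le_sqrt hnormsq
  refine ⟨hfirst, ?_⟩
  -- second bound
  have hub : ‖u‖ ≤ ‖us‖ + Real.sqrt (2 * η) := by
    calc ‖u‖ ≤ ‖us‖ + ‖u - us‖ := by
          have := norm_add_le us (u - us)
          simpa using this
      _ ≤ ‖us‖ + Real.sqrt (2 * η) := by linarith
  have hsd : ‖us‖ ≤ setDist (convexHull ℝ (Set.range x)) (convexHull ℝ (Set.range y)) := by
    apply le_csInf
    · exact ⟨‖vstar - wstar‖, vstar, hvstar, wstar, hwstar, rfl⟩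
    · rintro r ⟨a, ha, b, hb, rfl⟩
      exact hmin a ha b hb
  linarith
end

section
/- Let x_1, …, x_ℓ, y_1, …, y_m ∈ ℝ^d, P = conv{x_1, …, x_ℓ}, Q = conv{y_1, …, y_m}, and let (v_*, w_*) ∈ P × Q minimize ‖x − y‖ over P × Q. If a pair (v, w) ∈ P × Q satisfies ‖(v − w) − (v_* − w_*)‖ ≤ ε for some ε > 0, then for every η ≥ (diam(P) + diam(Q) + dist(P, Q)) ε one has ⟨v − w, x_i − v⟩ ≥ −η for all i ∈ {1, …, ℓ} and ⟨w − v, y_j − w⟩ ≥ −η for all j ∈ {1, …, m}. -/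
open RealInnerProductSpace

lemma opt_inner {E : Type*} [NormedAddCommGroup E] [InnerProductSpace ℝ E]
    {A B : Set E} (hA : Convex ℝ A) (hB : Convex ℝ B)
    {vs ws : E} (hvs : vs ∈ A) (hws : ws ∈ B)
    (hmin : ∀ p ∈ A, ∀ q ∈ B, ‖vs - ws‖ ≤ ‖p - q‖)
    {p q : E} (hp : p ∈ A) (hq : q ∈ B) :
    0 ≤ ⟪vs - ws, (p - q) - (vs - ws)⟫ := by
  set c := vs - ws with hc
  set z := (p - q) - c with hz
  by_contra h
  push_neg at h
  set s := ⟪c, z⟫ with hs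
  set t : ℝ := min 1 ((-s) / (‖z‖ ^ 2 + 1)) with ht
  have hz2 : (0:ℝ) ≤ ‖z‖ ^ 2 := sq_nonneg _
  have ht0 : 0 < t := by
    apply lt_min one_pos
    exact div_pos (by linarith) (by positivity)
  have ht1 : t ≤ 1 := min_le_left _ _
  have key : ‖c‖ ≤ ‖c + t • z‖ := by
    have hp' : (1 - t) • vs + t • p ∈ A := hA hvs hp (by linarith) (le_of_lt ht0) (by ring)
    have hq' : (1 - t) • ws + t • q ∈ B := hB hws hq (by linarith) (le_of_lt ht0) (by ring)
    have := hmin _ hp' _ hq'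
    have heq : ((1 - t) • vs + t • p) - ((1 - t) • ws + t • q) = c + t • z := by
      simp only [hc, hz]
      module
    rwa [heq] at this
  have key2 : ‖c‖ ^ 2 ≤ ‖c + t • z‖ ^ 2 := by
    apply pow_le_pow_left₀ (norm_nonneg _) key
  rw [norm_add_sq_real, real_inner_smul_right, norm_smul, Real.norm_eq_abs,
    abs_of_pos ht0, mul_pow] at key2
  have hta : t * ‖z‖ ^ 2 < -s := by
    calc t * ‖z‖ ^ 2 ≤ ((-s) / (‖z‖ ^ 2 + 1)) * ‖z‖ ^ 2 := by
          apply mul_le_mul_of_nonneg_right (min_le_right _ _) hz2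
      _ < -s := by
          rw [div_mul_eq_mul_div, div_lt_iff₀ (by positivity)]
          nlinarith
  nlinarith [mul_pos ht0 (neg_pos.mpr h)]

/-- If `(v_*, w_*)` minimizes `‖p − q‖` over `P × Q`, `D_P` and `D_Q` are the
maximum pairwise distances between the generating points of `P` resp. `Q`
(their diameters), and `(v, w) ∈ P × Q` satisfies
`‖(v − w) − (v_* − w_*)‖ ≤ ε` for some `ε > 0`, then for every
`η ≥ (D_P + D_Q + dist(P, Q)) ε` one has `⟪v − w, x_i − v⟫ ≥ −η` for all `i`
and `⟪w − v, y_j − w⟫ ≥ −η` for all `j`. -/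
theorem close_pair_implies_approx_opt (d ℓ m : ℕ)
    (x : Fin ℓ → EuclideanSpace ℝ (Fin d)) (y : Fin m → EuclideanSpace ℝ (Fin d))
    (DP DQ : ℝ)
    (hDP : IsGreatest (Set.range fun p : Fin ℓ × Fin ℓ => ‖x p.1 - x p.2‖) DP)
    (hDQ : IsGreatest (Set.range fun p : Fin m × Fin m => ‖y p.1 - y p.2‖) DQ)
    (vstar wstar : EuclideanSpace ℝ (Fin d))
    (hvstar : vstar ∈ convexHull ℝ (Set.range x))
    (hwstar : wstar ∈ convexHull ℝ (Set.range y))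
    (hmin : ∀ p ∈ convexHull ℝ (Set.range x), ∀ q ∈ convexHull ℝ (Set.range y),
      ‖vstar - wstar‖ ≤ ‖p - q‖)
    (v w : EuclideanSpace ℝ (Fin d))
    (hv : v ∈ convexHull ℝ (Set.range x)) (hw : w ∈ convexHull ℝ (Set.range y))
    (ε : ℝ) (hε : 0 < ε) (hclose : ‖(v - w) - (vstar - wstar)‖ ≤ ε) :
    ∀ η : ℝ,
      (DP + DQ + setDist (convexHull ℝ (Set.range x)) (convexHull ℝ (Set.range y))) * ε
        ≤ η →
      (∀ i : Fin ℓ, -η ≤ ⟪v - w, x i - v⟫) ∧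
        (∀ j : Fin m, -η ≤ ⟪w - v, y j - w⟫) := by

  intro η hη
  set P := convexHull ℝ (Set.range x) with hP
  set Q := convexHull ℝ (Set.range y) with hQ
  have hPc : Convex ℝ P := convex_convexHull ℝ _
  have hQc : Convex ℝ Q := convex_convexHull ℝ _
  set c := vstar - wstar with hcdef
  -- nonemptiness
  have hxne : (Set.range x).Nonempty := by
    by_contra hne
    rw [Set.not_nonempty_iff_eq_empty] at hne
    rw [hP, hne, convexHull_empty] at hv
    exact hv
  have hyne : (Set.range y).Nonempty := by
    by_contra hne
    rw [Set.not_nonempty_iff_eq_empty] at hne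
    rw [hQ, hne, convexHull_empty] at hw
    exact hw
  -- DP, DQ nonneg
  have hDPnn : 0 ≤ DP := by
    obtain ⟨_, i, rfl⟩ := hxne
    exact le_trans (by simp) (hDP.2 ⟨(i, i), rfl⟩)
  have hDQnn : 0 ≤ DQ := by
    obtain ⟨_, j, rfl⟩ := hyne
    exact le_trans (by simp) (hDQ.2 ⟨(j, j), rfl⟩)
  -- ‖c‖ ≤ setDist P Q
  have hcd : ‖c‖ ≤ setDist P Q := by
    refine le_csInf ⟨‖vstar - wstar‖, vstar, hvstar, wstar, hwstar, rfl⟩ ?_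
    rintro r ⟨a, ha, b, hb, rfl⟩
    exact hmin a ha b hb
  -- distance from hull points to vertices
  have hvert : ∀ (z : EuclideanSpace ℝ (Fin d)), ∀ i : Fin ℓ, z ∈ P → ‖x i - z‖ ≤ DP := by
    intro z i hz
    have hsub : Set.range x ⊆ Metric.closedBall (x i) DP := by
      rintro _ ⟨j, rfl⟩
      rw [Metric.mem_closedBall, dist_eq_norm]
      exact hDP.2 ⟨(j, i), rfl⟩
    have := convexHull_min hsub (convex_closedBall _ _) hz
    rw [Metric.mem_closedBall, dist_eq_norm] at this
    rwa [norm_sub_rev]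
  have hvertQ : ∀ (z : EuclideanSpace ℝ (Fin d)), ∀ j : Fin m, z ∈ Q → ‖y j - z‖ ≤ DQ := by
    intro z j hz
    have hsub : Set.range y ⊆ Metric.closedBall (y j) DQ := by
      rintro _ ⟨k, rfl⟩
      rw [Metric.mem_closedBall, dist_eq_norm]
      exact hDQ.2 ⟨(k, j), rfl⟩
    have := convexHull_min hsub (convex_closedBall _ _) hz
    rw [Metric.mem_closedBall, dist_eq_norm] at this
    rwa [norm_sub_rev]
  -- key inner product bounds
  have h1 : 0 ≤ ⟪c, v - vstar⟫ := by
    have := opt_inner hPc hQc hvstar hwstar hmin hv hwstar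
    have he : (v - wstar) - (vstar - wstar) = v - vstar := by abel
    rwa [he] at this
  have h2 : 0 ≤ ⟪c, wstar - w⟫ := by
    have := opt_inner hPc hQc hvstar hwstar hmin hvstar hw
    have he : (vstar - w) - (vstar - wstar) = wstar - w := by abel
    rwa [he] at this
  have hsum : ⟪c, v - vstar⟫ + ⟪c, wstar - w⟫ ≤ ε * ‖c‖ := by
    have he : ⟪c, v - vstar⟫ + ⟪c, wstar - w⟫ = ⟪c, (v - w) - c⟫ := by
      rw [← inner_add_right]
      congr 1
      simp only [hcdef]
      abel
    rw [he]
    calc ⟪c, (v - w) - c⟫ ≤ ‖c‖ * ‖(v - w) - c‖ := real_inner_le_norm _ _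
      _ ≤ ‖c‖ * ε := mul_le_mul_of_nonneg_left hclose (norm_nonneg _)
      _ = ε * ‖c‖ := mul_comm _ _
  have hηbound : ε * ‖c‖ + ε * DP ≤ η ∧ ε * ‖c‖ + ε * DQ ≤ η := by
    constructor <;> nlinarith [norm_nonneg c]
  constructor
  · intro i
    have hdec : ⟪v - w, x i - v⟫ =
        ⟪c, (x i - wstar) - c⟫ + ⟪c, vstar - v⟫ + ⟪(v - w) - c, x i - v⟫ := by
      rw [← inner_add_right,
        show (x i - wstar - c) + (vstar - v) = x i - v from by rw [hcdef]; abel,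
        inner_sub_left]
      simp only [inner_sub_left]
      ring
    have hopt : 0 ≤ ⟪c, (x i - wstar) - c⟫ :=
      opt_inner hPc hQc hvstar hwstar hmin (subset_convexHull ℝ _ ⟨i, rfl⟩) hwstar
    have hb1 : -(ε * ‖c‖) ≤ ⟪c, vstar - v⟫ := by
      have : ⟪c, vstar - v⟫ = -⟪c, v - vstar⟫ := by
        rw [← inner_neg_right]; congr 1; abel
      rw [this]
      linarith
    have hb2 : -(ε * DP) ≤ ⟪(v - w) - c, x i - v⟫ := by
      have := real_inner_le_norm ((v - w) - c) (v - x i)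
      have hn : ‖v - x i‖ ≤ DP := by rw [norm_sub_rev]; exact hvert v i hv
      have h3 : ⟪(v - w) - c, v - x i⟫ ≤ ε * DP := le_trans this
        (mul_le_mul hclose hn (norm_nonneg _) (le_of_lt hε))
      have he : ⟪(v - w) - c, x i - v⟫ = -⟪(v - w) - c, v - x i⟫ := by
        rw [← inner_neg_right]; congr 1; abel
      rw [he]; linarith
    rw [hdec]
    linarith [hηbound.1]
  · intro j
    have hdec : ⟪w - v, y j - w⟫ =
        ⟪c, (vstar - y j) - c⟫ + ⟪c, w - wstar⟫ + ⟪(w - v) - (-c), y j - w⟫ := by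
      rw [← inner_add_right,
        show (vstar - y j - c) + (w - wstar) = w - y j from by rw [hcdef]; abel,
        show w - y j = -(y j - w) from by abel,
        inner_neg_right]
      simp only [inner_sub_left, inner_neg_left]
      ring
    have hopt : 0 ≤ ⟪c, (vstar - y j) - c⟫ :=
      opt_inner hPc hQc hvstar hwstar hmin hvstar (subset_convexHull ℝ _ ⟨j, rfl⟩)
    have hb1 : -(ε * ‖c‖) ≤ ⟪c, w - wstar⟫ := by
      have : ⟪c, w - wstar⟫ = -⟪c, wstar - w⟫ := by
        rw [← inner_neg_right]; congr 1; abel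
      rw [this]
      linarith
    have hb2 : -(ε * DQ) ≤ ⟪(w - v) - (-c), y j - w⟫ := by
      have hnc : ‖(w - v) - (-c)‖ = ‖(v - w) - c‖ := by
        rw [← norm_neg]; congr 1; abel
      have := real_inner_le_norm ((w - v) - (-c)) (w - y j)
      have hn : ‖w - y j‖ ≤ DQ := by rw [norm_sub_rev]; exact hvertQ w j hw
      have h3 : ⟪(w - v) - (-c), w - y j⟫ ≤ ε * DQ := by
        refine le_trans this ?_
        rw [hnc]
        exact mul_le_mul hclose hn (norm_nonneg _) (le_of_lt hε)
      have he : ⟪(w - v) - (-c), y j - w⟫ = -⟪(w - v) - (-c), w - y j⟫ := by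
        rw [← inner_neg_right]; congr 1; abel
      rw [he]; linarith
    rw [hdec]
    linarith [hηbound.2]
end

section
/- Let x_1, …, x_ℓ, y_1, …, y_m ∈ ℝ^d, P = conv{x_1, …, x_ℓ}, Q = conv{y_1, …, y_m}. If a pair (v, w) ∈ P × Q satisfies ‖v − w‖ < ε for some ε > 0, then ⟨v − w, x_i − v⟩ ≥ −2(diam(P) + diam(Q) + dist(P, Q)) ε for all i ∈ {1, …, ℓ} and ⟨w − v, y_j − w⟩ ≥ −2(diam(P) + diam(Q) + dist(P, Q)) ε for all j ∈ {1, …, m}. (If (v_*, w_*) minimizes ‖x − y‖ over P × Q, then ‖v_* − w_*‖ ≤ ‖v − w‖ < ε, so ‖(v − w) − (v_* − w_*)‖ ≤ 2ε and the approximate optimality estimate applies.) -/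
open RealInnerProductSpace

lemma hull_dist_le {E : Type*} [NormedAddCommGroup E] [NormedSpace ℝ E]
    {n : ℕ} (x : Fin n → E) {D : ℝ}
    (hD : IsGreatest (Set.range fun p : Fin n × Fin n => ‖x p.1 - x p.2‖) D)
    {z : E} (hz : z ∈ convexHull ℝ (Set.range x)) (i : Fin n) :
    ‖x i - z‖ ≤ D := by
  have hsub : Set.range x ⊆ Metric.closedBall (x i) D := by
    rintro _ ⟨j, rfl⟩
    simp only [Metric.mem_closedBall, dist_eq_norm]
    exact hD.2 ⟨(j, i), rfl⟩
  have := convexHull_min hsub (convex_closedBall _ _) hz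
  simpa [Metric.mem_closedBall, dist_eq_norm, norm_sub_rev] using this

/-- If `(v, w) ∈ P × Q` satisfies `‖v − w‖ < ε` for some `ε > 0`, where `D_P`
and `D_Q` are the maximum pairwise distances between the generating points of
`P` resp. `Q` (their diameters), then
`⟪v − w, x_i − v⟫ ≥ −2(D_P + D_Q + dist(P, Q)) ε` for all `i` and
`⟪w − v, y_j − w⟫ ≥ −2(D_P + D_Q + dist(P, Q)) ε` for all `j`. -/
theorem small_gap_implies_approx_opt_pair (d ℓ m : ℕ)
    (x : Fin ℓ → EuclideanSpace ℝ (Fin d)) (y : Fin m → EuclideanSpace ℝ (Fin d))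
    (DP DQ : ℝ)
    (hDP : IsGreatest (Set.range fun p : Fin ℓ × Fin ℓ => ‖x p.1 - x p.2‖) DP)
    (hDQ : IsGreatest (Set.range fun p : Fin m × Fin m => ‖y p.1 - y p.2‖) DQ)
    (v w : EuclideanSpace ℝ (Fin d))
    (hv : v ∈ convexHull ℝ (Set.range x)) (hw : w ∈ convexHull ℝ (Set.range y))
    (ε : ℝ) (hε : 0 < ε) (hsmall : ‖v - w‖ < ε) :
    (∀ i : Fin ℓ,
        -(2 * (DP + DQ +
            setDist (convexHull ℝ (Set.range x)) (convexHull ℝ (Set.range y))) * ε) ≤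
          ⟪v - w, x i - v⟫) ∧
      ∀ j : Fin m,
        -(2 * (DP + DQ +
            setDist (convexHull ℝ (Set.range x)) (convexHull ℝ (Set.range y))) * ε) ≤
          ⟪w - v, y j - w⟫ := by
  set sd := setDist (convexHull ℝ (Set.range x)) (convexHull ℝ (Set.range y)) with hsd
  have hDP0 : 0 ≤ DP := by
    obtain ⟨⟨i, j⟩, -⟩ := hDP.1
    simpa using hDP.2 ⟨(i, i), rfl⟩
  have hDQ0 : 0 ≤ DQ := by
    obtain ⟨⟨i, j⟩, -⟩ := hDQ.1
    simpa using hDQ.2 ⟨(i, i), rfl⟩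
  have hsd0 : 0 ≤ sd := by
    apply Real.sInf_nonneg
    rintro r ⟨a, -, b, -, rfl⟩
    exact norm_nonneg _
  have key : ∀ a b : EuclideanSpace ℝ (Fin d), ‖a‖ < ε → ‖b‖ ≤ DP + DQ + sd →
      -(2 * (DP + DQ + sd) * ε) ≤ ⟪a, b⟫ := by
    intro a b ha hb
    have hcs : |⟪a, b⟫| ≤ ‖a‖ * ‖b‖ := abs_real_inner_le_norm a b
    have h1 : ‖a‖ * ‖b‖ ≤ ε * (DP + DQ + sd) :=
      mul_le_mul ha.le hb (norm_nonneg _) hε.le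
    have := (abs_le.mp hcs).1
    nlinarith [hε.le, hDP0, hDQ0, hsd0]
  constructor
  · intro i
    have hb : ‖x i - v‖ ≤ DP + DQ + sd :=
      (hull_dist_le x hDP hv i).trans (by linarith)
    exact key _ _ hsmall hb
  · intro j
    have hb : ‖y j - w‖ ≤ DP + DQ + sd :=
      (hull_dist_le y hDQ hw j).trans (by linarith)
    have ha : ‖w - v‖ < ε := by rwa [norm_sub_rev]
    exact key _ _ ha hb
end

section
/- (Quantitative one-step decrease of the distance between two convex sets.) Let P', Q' ⊆ ℝ^d be convex sets, v, x' ∈ P' and w, y' ∈ Q'. Suppose D_P > 0, D_Q > 0 and η satisfy 0 < η, η ≤ 2 D_P², η ≤ 2 D_Q², ‖x' − v‖ ≤ D_P, ‖y' − w‖ ≤ D_Q, ⟨v − w, x' − v⟩ ≤ −η, and ⟨w − v, y' − w⟩ ≤ −η. Then dist(P', Q')² ≤ ‖v − w‖² − (η² / 2)(1/D_P² + 1/D_Q²). (The pair of points (1 − t_*) v + t_* x' and (1 − τ_*) w + τ_* y' with t_* = η / (2 D_P²) ∈ (0, 1] and τ_* = η / (2 D_Q²) ∈ (0, 1] realizes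 this bound.) -/
open RealInnerProductSpace

/-- Quantitative one-step decrease of the distance between two convex sets:
if `v, x' ∈ P'`, `w, y' ∈ Q'`, `0 < η`, `η ≤ 2 D_P²`, `η ≤ 2 D_Q²`,
`‖x' − v‖ ≤ D_P`, `‖y' − w‖ ≤ D_Q`, `⟪v − w, x' − v⟫ ≤ −η`, and
`⟪w − v, y' − w⟫ ≤ −η`, then
`dist(P', Q')² ≤ ‖v − w‖² − (η²/2)(1/D_P² + 1/D_Q²)`. -/
theorem one_step_distance_decrease_two_sets (d : ℕ)
    (P' Q' : Set (EuclideanSpace ℝ (Fin d)))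
    (hP' : Convex ℝ P') (hQ' : Convex ℝ Q')
    (v x' w y' : EuclideanSpace ℝ (Fin d))
    (hv : v ∈ P') (hx' : x' ∈ P') (hw : w ∈ Q') (hy' : y' ∈ Q')
    (DP DQ η : ℝ) (hDP : 0 < DP) (hDQ : 0 < DQ)
    (hη : 0 < η) (hηP : η ≤ 2 * DP ^ 2) (hηQ : η ≤ 2 * DQ ^ 2)
    (hxv : ‖x' - v‖ ≤ DP) (hyw : ‖y' - w‖ ≤ DQ)
    (hinnerx : ⟪v - w, x' - v⟫ ≤ -η) (hinnery : ⟪w - v, y' - w⟫ ≤ -η) :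
    setDist P' Q' ^ 2 ≤
      ‖v - w‖ ^ 2 - η ^ 2 / 2 * (1 / DP ^ 2 + 1 / DQ ^ 2) := by
  set t : ℝ := η / (2 * DP ^ 2) with htdef
  set τ : ℝ := η / (2 * DQ ^ 2) with hτdef
  have hDP2 : (0:ℝ) < DP ^ 2 := by positivity
  have hDQ2 : (0:ℝ) < DQ ^ 2 := by positivity
  have ht0 : 0 < t := by positivity
  have hτ0 : 0 < τ := by positivity
  have ht1 : t ≤ 1 := by
    rw [htdef, div_le_one (by positivity)]; exact hηP
  have hτ1 : τ ≤ 1 := by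
    rw [hτdef, div_le_one (by positivity)]; exact hηQ
  set a : EuclideanSpace ℝ (Fin d) := (1 - t) • v + t • x' with hadef
  set b : EuclideanSpace ℝ (Fin d) := (1 - τ) • w + τ • y' with hbdef
  have ha : a ∈ P' := hP' hv hx' (by linarith) ht0.le (by ring)
  have hb : b ∈ Q' := hQ' hw hy' (by linarith) hτ0.le (by ring)
  have hmem : ‖a - b‖ ∈ {r : ℝ | ∃ x ∈ P', ∃ y ∈ Q', r = ‖x - y‖} :=
    ⟨a, ha, b, hb, rfl⟩
  have hbdd : BddBelow {r : ℝ | ∃ x ∈ P', ∃ y ∈ Q', r = ‖x - y‖} := by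
    refine ⟨0, ?_⟩
    rintro r ⟨x, _, y, _, rfl⟩
    exact norm_nonneg _
  have hle : setDist P' Q' ≤ ‖a - b‖ := csInf_le hbdd hmem
  have hnn : 0 ≤ setDist P' Q' := by
    apply le_csInf ⟨_, hmem⟩
    rintro r ⟨x, _, y, _, rfl⟩
    exact norm_nonneg _
  have hsq : setDist P' Q' ^ 2 ≤ ‖a - b‖ ^ 2 := pow_le_pow_left₀ hnn hle 2
  refine hsq.trans ?_
  -- rewrite a - b
  have hab : a - b = (v - w) + t • (x' - v) - τ • (y' - w) := by
    rw [hadef, hbdef]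
    module
  set u : EuclideanSpace ℝ (Fin d) := v - w with hudef
  set s : EuclideanSpace ℝ (Fin d) := x' - v with hsdef
  set r : EuclideanSpace ℝ (Fin d) := y' - w with hrdef
  have hexp : ‖a - b‖ ^ 2 =
      ‖u‖ ^ 2 + t ^ 2 * ‖s‖ ^ 2 + τ ^ 2 * ‖r‖ ^ 2 + 2 * t * ⟪u, s⟫
        - 2 * τ * ⟪u, r⟫ - 2 * (t * τ) * ⟪s, r⟫ := by
    rw [hab, ← real_inner_self_eq_norm_sq, ← real_inner_self_eq_norm_sq,
      ← real_inner_self_eq_norm_sq, ← real_inner_self_eq_norm_sq]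
    simp only [inner_add_left, inner_add_right, inner_sub_left, inner_sub_right,
      real_inner_smul_left, real_inner_smul_right]
    rw [real_inner_comm s u, real_inner_comm r u, real_inner_comm r s]
    ring
  rw [hexp]
  have hur : η ≤ ⟪u, r⟫ := by
    have : ⟪w - v, y' - w⟫ = -⟪u, r⟫ := by
      rw [hudef, hrdef, ← inner_neg_left]; congr 1; abel
    linarith [hinnery, this ▸ hinnery]
  have hus : ⟪u, s⟫ ≤ -η := hinnerx
  have hs0 : 0 ≤ ‖s‖ := norm_nonneg _
  have hr0 : 0 ≤ ‖r‖ := norm_nonneg _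
  have hsr : -(‖s‖ * ‖r‖) ≤ ⟪s, r⟫ := by
    have := abs_real_inner_le_norm s r
    cases abs_le.mp this with
    | intro h1 h2 => linarith
  have hs2 : ‖s‖ ^ 2 ≤ DP ^ 2 := pow_le_pow_left₀ (norm_nonneg _) hxv 2
  have hr2 : ‖r‖ ^ 2 ≤ DQ ^ 2 := pow_le_pow_left₀ (norm_nonneg _) hyw 2
  have hsrDP : ‖s‖ * ‖r‖ ≤ DP * DQ := mul_le_mul hxv hyw hr0 hDP.le
  have htval : t * DP ^ 2 = η / 2 := by
    rw [htdef]; field_simp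
  have hτval : τ * DQ ^ 2 = η / 2 := by
    rw [hτdef]; field_simp
  -- bound each term
  have h1 : t ^ 2 * ‖s‖ ^ 2 ≤ t * η / 2 := by
    have e1 : t ^ 2 * ‖s‖ ^ 2 ≤ t ^ 2 * DP ^ 2 :=
      mul_le_mul_of_nonneg_left hs2 (sq_nonneg t)
    have e2 : t ^ 2 * DP ^ 2 = t * (η / 2) := by
      rw [show t ^ 2 * DP ^ 2 = t * (t * DP ^ 2) from by ring, htval]
    linarith
  have h2 : τ ^ 2 * ‖r‖ ^ 2 ≤ τ * η / 2 := by
    have e1 : τ ^ 2 * ‖r‖ ^ 2 ≤ τ ^ 2 * DQ ^ 2 :=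
      mul_le_mul_of_nonneg_left hr2 (sq_nonneg τ)
    have e2 : τ ^ 2 * DQ ^ 2 = τ * (η / 2) := by
      rw [show τ ^ 2 * DQ ^ 2 = τ * (τ * DQ ^ 2) from by ring, hτval]
    linarith
  have h3 : 2 * t * ⟪u, s⟫ ≤ -(2 * t * η) := by
    have := mul_le_mul_of_nonneg_left hus (by linarith : (0:ℝ) ≤ 2 * t)
    linarith
  have h4 : -(2 * τ * ⟪u, r⟫) ≤ -(2 * τ * η) := by
    have := mul_le_mul_of_nonneg_left hur (by linarith : (0:ℝ) ≤ 2 * τ)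
    linarith
  have h5 : -(2 * (t * τ) * ⟪s, r⟫) ≤ 2 * (t * τ) * (DP * DQ) := by
    have htτ : (0:ℝ) ≤ 2 * (t * τ) := by positivity
    have e1 := mul_le_mul_of_nonneg_left hsr htτ
    have e2 := mul_le_mul_of_nonneg_left hsrDP htτ
    rw [mul_neg] at e1
    linarith [e1, e2]
  -- AM-GM part: 2 t τ DP DQ ≤ t η / 2 + τ η / 2
  have h6 : 2 * (t * τ) * (DP * DQ) ≤ t * η / 2 + τ * η / 2 := by
    have key : t * η / 2 = t * (τ * DQ ^ 2) := by rw [hτval]; ring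
    have key2 : τ * η / 2 = τ * (t * DP ^ 2) := by rw [htval]; ring
    rw [key, key2]
    have e : t * (τ * DQ ^ 2) + τ * (t * DP ^ 2) - 2 * (t * τ) * (DP * DQ)
        = (t * τ) * (DP - DQ) ^ 2 := by ring
    have e2 : (0:ℝ) ≤ (t * τ) * (DP - DQ) ^ 2 := by positivity
    linarith
  have hfin : t * η + τ * η = η ^ 2 / 2 * (1 / DP ^ 2 + 1 / DQ ^ 2) := by
    rw [htdef, hτdef]; field_simp
  linarith [h1, h2, h3, h4, h5, h6, hfin.ge, hfin.le]
end
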